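/- arXiv:1508.04651 — 5 statements merged into one kernel-verified Lean document; each statement's English description precedes it below -/
import Mathlib

section
/- Let (A,B,C) be a bipartite LR triple on V with tridiagonal space 𝒳, and let J be as defined. Then the subspaces 𝒳J = {XJ : X ∈ 𝒳} and 𝒳(I−J) = {X(I−J) : X ∈ 𝒳} of End(V) are both contained in 𝒳, and 𝒳 = 𝒳J ⊕ 𝒳(I−J) (internal direct sum). -/
/-- A decomposition of `V` of diameter `d`: a sequence of one-dimensional subspaces
`sub 0, …, sub d` whose (direct) sum is `V`; by convention `sub i = ⊥` for `i > d`
(encoding `V_{-1} = 0` and `V_{d+1} = 0`). -/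
structure LRDecomp (F : Type*) [Field F] (V : Type*) [AddCommGroup V] [Module F V]
    (d : ℕ) where
  sub : ℕ → Submodule F V
  finrank_eq_one : ∀ i ≤ d, Module.finrank F (sub i) = 1
  eq_bot_of_gt : ∀ i, d < i → sub i = ⊥
  isInternal : DirectSum.IsInternal fun i : Fin (d + 1) => sub i.val

variable {F : Type*} [Field F] {V : Type*} [AddCommGroup V] [Module F V]

/-- `A` lowers the decomposition: `A V_i = V_{i-1}` for `0 ≤ i ≤ d` (with `V_{-1} = 0`). -/
def Lowers {d : ℕ} (A : Module.End F V) (D : LRDecomp F V d) : Prop :=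
  Submodule.map A (D.sub 0) = ⊥ ∧ ∀ i < d, Submodule.map A (D.sub (i + 1)) = D.sub i

/-- `B` raises the decomposition: `B V_i = V_{i+1}` for `0 ≤ i ≤ d` (with `V_{d+1} = 0`). -/
def Raises {d : ℕ} (B : Module.End F V) (D : LRDecomp F V d) : Prop :=
  ∀ i ≤ d, Submodule.map B (D.sub i) = D.sub (i + 1)

/-- `D` is the (A,B)-decomposition: it is lowered by `A` and raised by `B`. -/
def IsLRPairWith {d : ℕ} (A B : Module.End F V) (D : LRDecomp F V d) : Prop :=
  Lowers A D ∧ Raises B D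

/-- `(A,B,C)` is an LR triple of diameter `d`. -/
def IsLRTriple (d : ℕ) (A B C : Module.End F V) : Prop :=
  (∃ D : LRDecomp F V d, IsLRPairWith A B D) ∧
  (∃ D : LRDecomp F V d, IsLRPairWith B C D) ∧
  (∃ D : LRDecomp F V d, IsLRPairWith C A D)

/-- `X` is tridiagonal with respect to the decomposition `D`:
`X V_i ⊆ V_{i-1} + V_i + V_{i+1}` (note `V_{0-1} ⊔ V_0 = V_0` makes `ℕ`-subtraction correct). -/
def IsTridiagonal {d : ℕ} (X : Module.End F V) (D : LRDecomp F V d) : Prop :=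
  ∀ i, ∀ v ∈ D.sub i, X v ∈ D.sub (i - 1) ⊔ D.sub i ⊔ D.sub (i + 1)

/-- The tridiagonal space of the LR triple with decompositions `D₁, D₂, D₃`. -/
def tridiagSpace {d : ℕ} (D₁ D₂ D₃ : LRDecomp F V d) : Submodule F (Module.End F V) where
  carrier := {X | IsTridiagonal X D₁ ∧ IsTridiagonal X D₂ ∧ IsTridiagonal X D₃}
  add_mem' := by
    rintro X Y ⟨hX1, hX2, hX3⟩ ⟨hY1, hY2, hY3⟩
    exact ⟨fun i v hv => by simpa using add_mem (hX1 i v hv) (hY1 i v hv),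
           fun i v hv => by simpa using add_mem (hX2 i v hv) (hY2 i v hv),
           fun i v hv => by simpa using add_mem (hX3 i v hv) (hY3 i v hv)⟩
  zero_mem' :=
    ⟨fun i v _ => by simp,
     fun i v _ => by simp,
     fun i v _ => by simp⟩
  smul_mem' := by
    rintro c X ⟨hX1, hX2, hX3⟩
    exact ⟨fun i v hv => by simpa using Submodule.smul_mem _ c (hX1 i v hv),
           fun i v hv => by simpa using Submodule.smul_mem _ c (hX2 i v hv),
           fun i v hv => by simpa using Submodule.smul_mem _ c (hX3 i v hv)⟩

/-- `E` is the idempotent sequence of the decomposition `D`: each `E i` acts as the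
identity on `sub i` and as zero on `sub j` for `j ≠ i`. -/
def IsIdemSeq {d : ℕ} (D : LRDecomp F V d) (E : ℕ → Module.End F V) : Prop :=
  ∀ i, (∀ v ∈ D.sub i, E i v = v) ∧ ∀ j, j ≠ i → ∀ v ∈ D.sub j, E i v = 0

/-- Bipartite: all trace data `a_i = tr(C E_i)`, `a'_i = tr(A E'_i)`, `a''_i = tr(B E''_i)`
vanish, where `E, E', E''` are the idempotent data of the triple `(A,B,C)`. -/
def IsBipartite (d : ℕ) (A B C : Module.End F V)
    (E E' E'' : ℕ → Module.End F V) : Prop :=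
  ∀ i ≤ d, LinearMap.trace F V (C * E i) = 0 ∧
    LinearMap.trace F V (A * E' i) = 0 ∧ LinearMap.trace F V (B * E'' i) = 0

/-- An LR pair `(A,B)` has `q`-Weyl type. -/
def IsQWeylPair (q : F) (A B : Module.End F V) : Prop :=
  q ≠ 0 ∧ q ^ 2 ≠ 1 ∧ q • (A * B) - q⁻¹ • (B * A) = (q - q⁻¹) • (1 : Module.End F V)

/-- An LR triple `(A,B,C)` has `q`-Weyl type. -/
def IsQWeylTriple (q : F) (A B C : Module.End F V) : Prop :=
  IsQWeylPair q A B ∧ IsQWeylPair q B C ∧ IsQWeylPair q C A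

/-- `v` is an `(A,B)`-basis, relative to the `(A,B)`-decomposition `D`:
`v i ∈ sub i` is nonzero and `A v_i = v_{i-1}`. -/
def IsLRBasisFor {d : ℕ} (A : Module.End F V) (D : LRDecomp F V d) (v : ℕ → V) : Prop :=
  (∀ i ≤ d, v i ∈ D.sub i ∧ v i ≠ 0) ∧ ∀ i, 1 ≤ i → i ≤ d → A (v i) = v (i - 1)

/-- `v` is a `(B,A)`-style basis relative to the `(A,B)`-decomposition `D` of the
reversed pair: `v i ∈ sub (d-i)` is nonzero and the lowering map sends `v i ↦ v (i-1)`.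
(Used for `(C,B)`-bases relative to the `(B,C)`-decomposition, etc.) -/
def IsLRBasisRev {d : ℕ} (A : Module.End F V) (D : LRDecomp F V d) (v : ℕ → V) : Prop :=
  (∀ i ≤ d, v i ∈ D.sub (d - i) ∧ v i ≠ 0) ∧ ∀ i, 1 ≤ i → i ≤ d → A (v i) = v (i - 1)

/-- The transition matrix from the basis `u` to the basis `w` is upper triangular
Toeplitz with parameters `α`: `w j = ∑_{i ≤ j} α_{j-i} u_i`. -/
def IsToeplitzTransition (d : ℕ) (u w : ℕ → V) (α : ℕ → F) : Prop :=
  ∀ j ≤ d, w j = ∑ i ∈ Finset.range (j + 1), α (j - i) • u i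

/-- `φ` is the parameter sequence of the LR pair `(A,B)` with `(A,B)`-decomposition `D`:
`BA` acts on `V_i` as `φ i` for `1 ≤ i ≤ d`, with conventions `φ 0 = 0 = φ (d+1)`. -/
def IsParamSeq {d : ℕ} (A B : Module.End F V) (D : LRDecomp F V d) (φ : ℕ → F) : Prop :=
  φ 0 = 0 ∧ φ (d + 1) = 0 ∧ ∀ i, 1 ≤ i → i ≤ d → ∀ v ∈ D.sub i, B (A v) = φ i • v


set_option linter.unusedSectionVars false

section LRAux

variable {F : Type*} [Field F] {V : Type*} [AddCommGroup V] [Module F V]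
variable [FiniteDimensional F V] {d : ℕ}

theorem LRAux.top_le (D : LRDecomp F V d) (S : Submodule F V)
    (h : ∀ j ≤ d, D.sub j ≤ S) : ∀ v : V, v ∈ S := by
  have htop : (⊤ : Submodule F V) ≤ S := by
    rw [← D.isInternal.submodule_iSup_eq_top]
    exact iSup_le fun j => h j.val (Nat.lt_succ_iff.mp j.isLt)
  exact fun v => htop trivial

theorem LRAux.mem_sub (D : LRDecomp F V d) (E : ℕ → Module.End F V)
    (hE : IsIdemSeq D E) (i : ℕ) : ∀ v : V, E i v ∈ D.sub i := by
  apply LRAux.top_le D ((D.sub i).comap (E i))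
  intro j _ w hw
  rcases eq_or_ne j i with rfl | hne
  · simpa [Submodule.mem_comap, (hE j).1 w hw] using hw
  · simp [Submodule.mem_comap, (hE i).2 j hne w hw]

theorem LRAux.sum_E (D : LRDecomp F V d) (E : ℕ → Module.End F V)
    (hE : IsIdemSeq D E) : ∀ v : V, ∑ j ∈ Finset.range (d + 1), E j v = v := by
  intro v
  have := LRAux.top_le D (LinearMap.ker ((∑ j ∈ Finset.range (d + 1), E j) - 1)) ?_ v
  · have h := LinearMap.mem_ker.mp this
    simp only [LinearMap.sub_apply, LinearMap.sum_apply, Module.End.one_apply,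
      sub_eq_zero] at h
    exact h
  · intro j hj w hw
    rw [LinearMap.mem_ker, LinearMap.sub_apply, LinearMap.sum_apply, Module.End.one_apply,
      sub_eq_zero]
    rw [Finset.sum_eq_single_of_mem j (Finset.mem_range.mpr (by omega))]
    · exact (hE j).1 w hw
    · intro k _ hk
      exact (hE k).2 j (Ne.symm hk) w hw

theorem LRAux.mem_supP (D : LRDecomp F V d) (E : ℕ → Module.End F V)
    (hE : IsIdemSeq D E) (p : ℕ → Prop) (v : V)
    (h : ∀ j ≤ d, ¬ p j → E j v = 0) : v ∈ ⨆ j, ⨆ _ : p j, D.sub j := by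
  rw [← LRAux.sum_E D E hE v]
  refine Submodule.sum_mem _ fun j hj => ?_
  by_cases hpj : p j
  · exact Submodule.mem_iSup_of_mem j (Submodule.mem_iSup_of_mem hpj (LRAux.mem_sub D E hE j v))
  · rw [h j (by simpa [Nat.lt_succ_iff] using hj) hpj]; exact Submodule.zero_mem _

theorem LRAux.supP_killed (D : LRDecomp F V d) (E : ℕ → Module.End F V)
    (hE : IsIdemSeq D E) (p : ℕ → Prop) (i : ℕ) (hpi : ∀ j, p j → j ≠ i) :
    ∀ v ∈ (⨆ j, ⨆ _ : p j, D.sub j), E i v = 0 := by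
  have : (⨆ j, ⨆ _ : p j, D.sub j) ≤ LinearMap.ker (E i) := by
    refine iSup_le fun j => iSup_le fun hpj => fun w hw => ?_
    exact LinearMap.mem_ker.mpr ((hE i).2 j (hpi j hpj) w hw)
  exact fun v hv => LinearMap.mem_ker.mp (this hv)

theorem LRAux.inj_of_map (f : Module.End F V) (S T : Submodule F V)
    (hS : Module.finrank F S = 1) (hT : Module.finrank F T = 1)
    (hmap : Submodule.map f S = T) : ∀ v ∈ S, f v = 0 → v = 0 := by
  obtain ⟨s, hs0, hsp⟩ := finrank_eq_one_iff'.mp hS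
  have hfs : f (s : V) ≠ 0 := by
    intro hfs
    have hTbot : T = ⊥ := by
      rw [← hmap, Submodule.eq_bot_iff]
      rintro x ⟨w, hw, rfl⟩
      obtain ⟨c, hc⟩ := hsp ⟨w, hw⟩
      have : c • (s : V) = w := congrArg Subtype.val hc
      rw [← this, map_smul, hfs, smul_zero]
    rw [hTbot] at hT
    simp at hT
  intro v hv hfv
  obtain ⟨c, hc⟩ := hsp ⟨v, hv⟩
  have hcv : c • (s : V) = v := congrArg Subtype.val hc
  rw [← hcv, map_smul] at hfv
  rcases smul_eq_zero.mp hfv with rfl | h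
  · rw [← hcv, zero_smul]
  · exact absurd h hfs

section Raise
variable (D : LRDecomp F V d) (M : Module.End F V) (hM : Raises M D)
include hM

theorem LRAux.raise_mem (m : ℕ) : ∀ i, ∀ v ∈ D.sub i, (M ^ m) v ∈ D.sub (i + m) := by
  induction m with
  | zero => intro i v hv; simpa using hv
  | succ m ih =>
    intro i v hv
    rw [pow_succ, Module.End.mul_apply]
    have hMv : M v ∈ D.sub (i + 1) := by
      by_cases hi : i ≤ d
      · rw [← hM i hi]; exact Submodule.mem_map_of_mem hv
      · have : v = 0 := by
          simpa [D.eq_bot_of_gt i (by omega)] using hv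
        rw [this, map_zero]; exact Submodule.zero_mem _
    have := ih (i + 1) (M v) hMv
    have heq : i + 1 + m = i + (m + 1) := by omega
    rwa [heq] at this

theorem LRAux.raise_inj (m : ℕ) : ∀ i, i + m ≤ d → ∀ v ∈ D.sub i, (M ^ m) v = 0 → v = 0 := by
  induction m with
  | zero => intro i _ v _ h; simpa using h
  | succ m ih =>
    intro i hi v hv h
    rw [pow_succ, Module.End.mul_apply] at h
    have hMv : M v ∈ D.sub (i + 1) := by
      rw [← hM i (by omega)]; exact Submodule.mem_map_of_mem hv
    have hMv0 : M v = 0 := ih (i + 1) (by omega) (M v) hMv h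
    exact LRAux.inj_of_map M (D.sub i) (D.sub (i + 1))
      (D.finrank_eq_one i (by omega)) (D.finrank_eq_one (i + 1) (by omega))
      (hM i (by omega)) v hv hMv0

theorem LRAux.raise_ker (E : ℕ → Module.End F V) (hE : IsIdemSeq D E)
    (m : ℕ) (hm : m ≤ d) :
    LinearMap.ker (M ^ (m + 1)) = ⨆ j, ⨆ _ : d - m ≤ j, D.sub j := by
  apply le_antisymm
  · intro v hv
    have hv0 : (M ^ (m + 1)) v = 0 := LinearMap.mem_ker.mp hv
    refine LRAux.mem_supP D E hE _ v fun j hj hpj => ?_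
    have hjlt : j + (m + 1) ≤ d := by omega
    have key : (M ^ (m + 1)) (E j v) = 0 := by
      have h1 : E (j + m + 1) ((M ^ (m + 1)) v) = 0 := by rw [hv0, map_zero]
      conv_lhs at h1 => rw [← LRAux.sum_E D E hE v, map_sum, map_sum]
      rw [Finset.sum_eq_single_of_mem j (Finset.mem_range.mpr (by omega))] at h1
      · rwa [(hE (j + m + 1)).1 _ (by
          have := LRAux.raise_mem D M hM (m + 1) j (E j v) (LRAux.mem_sub D E hE j v)
          rwa [show j + (m + 1) = j + m + 1 by omega] at this)] at h1
      · intro k _ hk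
        exact (hE (j + m + 1)).2 (k + (m + 1)) (by omega) _
          (LRAux.raise_mem D M hM (m + 1) k (E k v) (LRAux.mem_sub D E hE k v))
    exact LRAux.raise_inj D M hM (m + 1) j hjlt (E j v) (LRAux.mem_sub D E hE j v) key
  · refine iSup_le fun j => iSup_le fun hj => fun v hv => ?_
    rw [LinearMap.mem_ker]
    have := LRAux.raise_mem D M hM (m + 1) j v hv
    simpa [D.eq_bot_of_gt (j + (m + 1)) (by omega)] using this

theorem LRAux.map_le_raise (j : ℕ) : Submodule.map M (D.sub j) ≤ D.sub (j + 1) := by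
  by_cases hj : j ≤ d
  · rw [hM j hj]
  · rw [D.eq_bot_of_gt j (by omega), Submodule.map_bot]
    exact bot_le

end Raise

section Lower
variable (D : LRDecomp F V d) (M : Module.End F V) (hL : Lowers M D)
include hL

theorem LRAux.lower_mem (m : ℕ) : ∀ i, ∀ v ∈ D.sub i,
    (M ^ m) v ∈ D.sub (i - m) ∧ (i < m → (M ^ m) v = 0) := by
  induction m with
  | zero => intro i v hv; exact ⟨by simpa using hv, by omega⟩
  | succ m ih =>
    intro i v hv
    rw [pow_succ, Module.End.mul_apply]
    by_cases hid : i ≤ d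
    · rcases Nat.eq_zero_or_pos i with rfl | hipos
      · have hMv : M v = 0 := by
          have := hL.1
          have : M v ∈ (⊥ : Submodule F V) := this ▸ Submodule.mem_map_of_mem hv
          simpa using this
        rw [hMv, map_zero]
        exact ⟨Submodule.zero_mem _, fun _ => rfl⟩
      · have hMv : M v ∈ D.sub (i - 1) := by
          have h2 := hL.2 (i - 1) (by omega)
          rw [show i - 1 + 1 = i by omega] at h2
          rw [← h2]; exact Submodule.mem_map_of_mem hv
        obtain ⟨h1, h2⟩ := ih (i - 1) (M v) hMv
        refine ⟨by rwa [show i - 1 - m = i - (m + 1) by omega] at h1, fun hlt => h2 (by omega)⟩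
    · have hv0 : v = 0 := by simpa [D.eq_bot_of_gt i (by omega)] using hv
      rw [hv0, map_zero, map_zero]
      exact ⟨Submodule.zero_mem _, fun _ => rfl⟩

theorem LRAux.lower_inj (m : ℕ) : ∀ i, m ≤ i → i ≤ d → ∀ v ∈ D.sub i,
    (M ^ m) v = 0 → v = 0 := by
  induction m with
  | zero => intro i _ _ v _ h; simpa using h
  | succ m ih =>
    intro i hmi hid v hv h
    rw [pow_succ, Module.End.mul_apply] at h
    have h2 := hL.2 (i - 1) (by omega)
    rw [show i - 1 + 1 = i by omega] at h2
    have hMv : M v ∈ D.sub (i - 1) := h2 ▸ Submodule.mem_map_of_mem hv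
    have hMv0 : M v = 0 := ih (i - 1) (by omega) (by omega) (M v) hMv h
    exact LRAux.inj_of_map M (D.sub i) (D.sub (i - 1))
      (D.finrank_eq_one i hid) (D.finrank_eq_one (i - 1) (by omega)) h2 v hv hMv0

theorem LRAux.lower_ker (E : ℕ → Module.End F V) (hE : IsIdemSeq D E)
    (m : ℕ) (hm : m ≤ d) :
    LinearMap.ker (M ^ (m + 1)) = ⨆ j, ⨆ _ : j ≤ m, D.sub j := by
  apply le_antisymm
  · intro v hv
    have hv0 : (M ^ (m + 1)) v = 0 := LinearMap.mem_ker.mp hv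
    refine LRAux.mem_supP D E hE _ v fun j hj hpj => ?_
    have hjm : m + 1 ≤ j := by omega
    have key : (M ^ (m + 1)) (E j v) = 0 := by
      have h1 : E (j - (m + 1)) ((M ^ (m + 1)) v) = 0 := by rw [hv0, map_zero]
      conv_lhs at h1 => rw [← LRAux.sum_E D E hE v, map_sum, map_sum]
      rw [Finset.sum_eq_single_of_mem j (Finset.mem_range.mpr (by omega))] at h1
      · rwa [(hE (j - (m + 1))).1 _
          ((LRAux.lower_mem D M hL (m + 1) j (E j v) (LRAux.mem_sub D E hE j v)).1)] at h1
      · intro k _ hk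
        by_cases hkm : k < m + 1
        · rw [(LRAux.lower_mem D M hL (m + 1) k (E k v) (LRAux.mem_sub D E hE k v)).2 hkm,
            map_zero]
        · exact (hE (j - (m + 1))).2 (k - (m + 1)) (by omega) _
            ((LRAux.lower_mem D M hL (m + 1) k (E k v) (LRAux.mem_sub D E hE k v)).1)
    exact LRAux.lower_inj D M hL (m + 1) j hjm hj (E j v) (LRAux.mem_sub D E hE j v) key
  · refine iSup_le fun j => iSup_le fun hj => fun v hv => ?_
    rw [LinearMap.mem_ker]
    exact (LRAux.lower_mem D M hL (m + 1) j v hv).2 (by omega)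

theorem LRAux.map_le_lower (j : ℕ) (hj : 1 ≤ j) :
    Submodule.map M (D.sub j) ≤ D.sub (j - 1) := by
  by_cases hjd : j ≤ d
  · have h2 := hL.2 (j - 1) (by omega)
    rw [show j - 1 + 1 = j by omega] at h2
    rw [h2]
  · rw [D.eq_bot_of_gt j (by omega), Submodule.map_bot]
    exact bot_le

end Lower

end LRAux

theorem stmt2
    {F : Type*} [Field F] {V : Type*} [AddCommGroup V] [Module F V]
    [FiniteDimensional F V] {d : ℕ} (hdim : Module.finrank F V = d + 1)
    (A B C : Module.End F V) (DAB DBC DCA : LRDecomp F V d)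
    (hAB : IsLRPairWith A B DAB) (hBC : IsLRPairWith B C DBC) (hCA : IsLRPairWith C A DCA)
    (E E' E'' : ℕ → Module.End F V)
    (hE : IsIdemSeq DAB E) (hE' : IsIdemSeq DBC E') (hE'' : IsIdemSeq DCA E'')
    (hbip : IsBipartite d A B C E E' E'')
    (J : Module.End F V) (hJ : J = ∑ j ∈ Finset.range (d / 2 + 1), E (2 * j)) :
    Submodule.map (LinearMap.mulRight F J) (tridiagSpace DAB DBC DCA) ≤ tridiagSpace DAB DBC DCA ∧
    Submodule.map (LinearMap.mulRight F (1 - J)) (tridiagSpace DAB DBC DCA) ≤ tridiagSpace DAB DBC DCA ∧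
    Submodule.map (LinearMap.mulRight F J) (tridiagSpace DAB DBC DCA) ⊔ Submodule.map (LinearMap.mulRight F (1 - J)) (tridiagSpace DAB DBC DCA) = tridiagSpace DAB DBC DCA ∧
    Submodule.map (LinearMap.mulRight F J) (tridiagSpace DAB DBC DCA) ⊓ Submodule.map (LinearMap.mulRight F (1 - J)) (tridiagSpace DAB DBC DCA) = ⊥ := by
  classical
  obtain ⟨hABl, hABr⟩ := hAB
  obtain ⟨hBCl, hBCr⟩ := hBC
  obtain ⟨hCAl, hCAr⟩ := hCA
  -- Step 1: the diagonal of C with respect to DAB vanishes (trace argument)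
  have hdiag : ∀ i ≤ d, ∀ v ∈ DAB.sub i, E i (C v) = 0 := by
    intro i hi v hv
    obtain ⟨s, hs0, hsp⟩ := finrank_eq_one_iff'.mp (DAB.finrank_eq_one i hi)
    obtain ⟨a, ha⟩ := hsp ⟨E i (C (s : V)), LRAux.mem_sub DAB E hE i _⟩
    have ha' : a • (s : V) = E i (C (s : V)) := congrArg Subtype.val ha
    have heq : E i * (C * E i) = a • E i := by
      apply LinearMap.ext
      intro w
      have hw := LRAux.top_le DAB (LinearMap.ker (E i * (C * E i) - a • E i)) ?_ w
      · have hk := LinearMap.mem_ker.mp hw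
        rwa [LinearMap.sub_apply, sub_eq_zero] at hk
      · intro j hj u hu
        rw [LinearMap.mem_ker, LinearMap.sub_apply, sub_eq_zero,
          Module.End.mul_apply, Module.End.mul_apply, LinearMap.smul_apply]
        rcases eq_or_ne j i with rfl | hne
        · obtain ⟨c, hc⟩ := hsp ⟨u, hu⟩
          have hc' : c • (s : V) = u := congrArg Subtype.val hc
          rw [(hE j).1 u hu, ← hc', map_smul, map_smul, ← ha']
          exact smul_comm c a _
        · rw [(hE i).2 j hne u hu, map_zero, map_zero, smul_zero]
    have hEidem : E i * E i = E i := by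
      apply LinearMap.ext
      intro w
      rw [Module.End.mul_apply]
      exact (hE i).1 (E i w) (LRAux.mem_sub DAB E hE i w)
    have hprj : LinearMap.trace F V (E i) = 1 := by
      have hproj : LinearMap.IsProj (DAB.sub i) (E i) :=
        ⟨fun x => LRAux.mem_sub DAB E hE i x, fun x hx => (hE i).1 x hx⟩
      rw [hproj.trace, DAB.finrank_eq_one i hi, Nat.cast_one]
    have htr : LinearMap.trace F V (C * E i) = a * LinearMap.trace F V (E i) := by
      conv_lhs => rw [← hEidem, ← mul_assoc]
      rw [LinearMap.trace_mul_comm, heq, map_smul, smul_eq_mul]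
    have htr0 := (hbip i hi).1
    rw [htr, hprj, mul_one] at htr0
    obtain ⟨c, hc⟩ := hsp ⟨v, hv⟩
    have hc' : c • (s : V) = v := congrArg Subtype.val hc
    rw [← hc', map_smul, map_smul, ← ha', htr0, zero_smul, smul_zero]
  -- Step 2: components of C v below i-1 vanish
  have hCL : ∀ i, 1 ≤ i → i ≤ d → ∀ v ∈ DAB.sub i, ∀ j, j < i - 1 → E j (C v) = 0 := by
    intro i h1 hid v hv j hj
    have hv1 : v ∈ LinearMap.ker (B ^ (d - i + 1)) := by
      rw [LRAux.raise_ker DAB B hABr E hE (d - i) (by omega)]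
      exact Submodule.mem_iSup_of_mem i (Submodule.mem_iSup_of_mem (by omega) hv)
    rw [LRAux.lower_ker DBC B hBCl E' hE' (d - i) (by omega)] at hv1
    have hCv : C v ∈ (⨆ k, ⨆ _ : k ≤ d - i + 1, DBC.sub k) := by
      have hmap : Submodule.map C (⨆ k, ⨆ _ : k ≤ d - i, DBC.sub k) ≤
          ⨆ k, ⨆ _ : k ≤ d - i + 1, DBC.sub k := by
        rw [Submodule.map_iSup]
        refine iSup_le fun k => ?_
        rw [Submodule.map_iSup]
        refine iSup_le fun hk => ?_
        exact le_trans (LRAux.map_le_raise DBC C hBCr k)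
          (le_iSup_of_le (k + 1) (le_iSup_of_le (by omega) le_rfl))
      exact hmap (Submodule.mem_map_of_mem hv1)
    rw [← LRAux.lower_ker DBC B hBCl E' hE' (d - i + 1) (by omega),
      LRAux.raise_ker DAB B hABr E hE (d - i + 1) (by omega)] at hCv
    exact LRAux.supP_killed DAB E hE _ j (fun k hk => by omega) (C v) hCv
  -- Step 3: components of C v above i+1 vanish
  have hCU : ∀ i, i < d → ∀ v ∈ DAB.sub i, ∀ j, i + 1 < j → E j (C v) = 0 := by
    intro i hid v hv j hj
    have hv1 : v ∈ LinearMap.ker (A ^ (i + 1)) := by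
      rw [LRAux.lower_ker DAB A hABl E hE i (by omega)]
      exact Submodule.mem_iSup_of_mem i (Submodule.mem_iSup_of_mem le_rfl hv)
    rw [LRAux.raise_ker DCA A hCAr E'' hE'' i (by omega)] at hv1
    have hCv : C v ∈ (⨆ k, ⨆ _ : d - (i + 1) ≤ k, DCA.sub k) := by
      have hmap : Submodule.map C (⨆ k, ⨆ _ : d - i ≤ k, DCA.sub k) ≤
          ⨆ k, ⨆ _ : d - (i + 1) ≤ k, DCA.sub k := by
        rw [Submodule.map_iSup]
        refine iSup_le fun k => ?_
        rw [Submodule.map_iSup]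
        refine iSup_le fun hk => ?_
        exact le_trans (LRAux.map_le_lower DCA C hCAl k (by omega))
          (le_iSup_of_le (k - 1) (le_iSup_of_le (by omega) le_rfl))
      exact hmap (Submodule.mem_map_of_mem hv1)
    rw [← LRAux.raise_ker DCA A hCAr E'' hE'' (i + 1) (by omega),
      LRAux.lower_ker DAB A hABl E hE (i + 1) (by omega)] at hCv
    exact LRAux.supP_killed DAB E hE _ j (fun k hk => by omega) (C v) hCv
  -- Step 4: C flips parity of the DAB-decomposition
  have hcomp : ∀ i ≤ d, ∀ v ∈ DAB.sub i, ∀ j ≤ d, j % 2 = i % 2 → E j (C v) = 0 := by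
    intro i hi v hv j hjd hpar
    rcases eq_or_ne j i with rfl | hne
    · exact hdiag j hjd v hv
    · rcases (by omega : j < i - 1 ∨ i + 1 < j) with h | h
      · exact hCL i (by omega) hi v hv j h
      · exact hCU i (by omega) v hv j h
  have hCW : ∀ b : ℕ, (⨆ j, ⨆ _ : j % 2 = b % 2, DAB.sub j) ≤
      Submodule.comap C (⨆ j, ⨆ _ : j % 2 = (b + 1) % 2, DAB.sub j) := by
    intro b
    refine iSup_le fun j => iSup_le fun hj => fun v hv => ?_
    rw [Submodule.mem_comap]
    by_cases hjd : j ≤ d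
    · exact LRAux.mem_supP DAB E hE _ (C v) fun k hk hkp => hcomp j hjd v hv k hk (by omega)
    · have hv0 : v = 0 := by simpa [DAB.eq_bot_of_gt j (by omega)] using hv
      rw [hv0, map_zero]
      exact Submodule.zero_mem _
  -- A also flips parity
  have hAW : ∀ b : ℕ, (⨆ j, ⨆ _ : j % 2 = b % 2, DAB.sub j) ≤
      Submodule.comap A (⨆ j, ⨆ _ : j % 2 = (b + 1) % 2, DAB.sub j) := by
    intro b
    refine iSup_le fun j => iSup_le fun hj => fun v hv => ?_
    rw [Submodule.mem_comap]
    rcases Nat.eq_zero_or_pos j with rfl | hj1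
    · have hAv : A v ∈ (⊥ : Submodule F V) := by
        rw [← hABl.1]
        exact Submodule.mem_map_of_mem hv
      rw [Submodule.mem_bot] at hAv
      rw [hAv]
      exact Submodule.zero_mem _
    · have hAv : A v ∈ DAB.sub (j - 1) :=
        LRAux.map_le_lower DAB A hABl j hj1 (Submodule.mem_map_of_mem hv)
      exact Submodule.mem_iSup_of_mem (j - 1) (Submodule.mem_iSup_of_mem (by omega) hAv)
  -- Step 5: alternation of the three decompositions
  have hPalt : ∀ i, ∃ b, DAB.sub i ≤ ⨆ j, ⨆ _ : j % 2 = b % 2, DAB.sub j := by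
    intro i
    exact ⟨i, le_iSup_of_le i (le_iSup_of_le rfl le_rfl)⟩
  have hQalt : ∀ i, ∃ b, DBC.sub i ≤ ⨆ j, ⨆ _ : j % 2 = b % 2, DAB.sub j := by
    intro i
    induction i with
    | zero =>
      refine ⟨d, ?_⟩
      have hQ0 : DBC.sub 0 ≤ ⨆ j, ⨆ _ : d - 0 ≤ j, DAB.sub j := by
        rw [← LRAux.raise_ker DAB B hABr E hE 0 (by omega)]
        intro v hv
        rw [LinearMap.mem_ker, pow_one]
        have hBv : B v ∈ (⊥ : Submodule F V) := by
          rw [← hBCl.1]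
          exact Submodule.mem_map_of_mem hv
        simpa using hBv
      refine le_trans hQ0 (iSup_le fun j => iSup_le fun hj => ?_)
      by_cases hjd : j ≤ d
      · have hje : j = d := by omega
        subst hje
        exact le_iSup_of_le j (le_iSup_of_le rfl le_rfl)
      · rw [DAB.eq_bot_of_gt j (by omega)]
        exact bot_le
    | succ i ih =>
      by_cases hid : i + 1 ≤ d
      · obtain ⟨b, hb⟩ := ih
        refine ⟨b + 1, ?_⟩
        rw [← hBCr i (by omega), Submodule.map_le_iff_le_comap]
        exact le_trans hb (hCW b)
      · refine ⟨0, ?_⟩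
        rw [DBC.eq_bot_of_gt (i + 1) (by omega)]
        exact bot_le
  have hRalt : ∀ i, ∃ b, DCA.sub i ≤ ⨆ j, ⨆ _ : j % 2 = b % 2, DAB.sub j := by
    intro i
    induction i with
    | zero =>
      obtain ⟨b, hb⟩ := hQalt d
      refine ⟨b, ?_⟩
      have hR0 : DCA.sub 0 ≤ LinearMap.ker (C ^ (0 + 1)) := by
        intro v hv
        rw [LinearMap.mem_ker, pow_one]
        have hCv : C v ∈ (⊥ : Submodule F V) := by
          rw [← hCAl.1]
          exact Submodule.mem_map_of_mem hv
        simpa using hCv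
      rw [LRAux.raise_ker DBC C hBCr E' hE' 0 (by omega)] at hR0
      refine le_trans hR0 (iSup_le fun k => iSup_le fun hk => ?_)
      by_cases hkd : k ≤ d
      · have hke : k = d := by omega
        subst hke
        exact hb
      · rw [DBC.eq_bot_of_gt k (by omega)]
        exact bot_le
    | succ i ih =>
      by_cases hid : i + 1 ≤ d
      · obtain ⟨b, hb⟩ := ih
        refine ⟨b + 1, ?_⟩
        rw [← hCAr i (by omega), Submodule.map_le_iff_le_comap]
        exact le_trans hb (hAW b)
      · refine ⟨0, ?_⟩
        rw [DCA.eq_bot_of_gt (i + 1) (by omega)]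
        exact bot_le
  -- Step 6: J acts as 0 or 1 on the pieces
  have hJ0 : ∀ i, i % 2 = 0 → ∀ v ∈ DAB.sub i, J v = v := by
    intro i hpar v hv
    by_cases hi : i ≤ d
    · rw [hJ, LinearMap.sum_apply,
        Finset.sum_eq_single_of_mem (i / 2) (Finset.mem_range.mpr (by omega))]
      · rw [show 2 * (i / 2) = i by omega]
        exact (hE i).1 v hv
      · intro k _ hk
        exact (hE (2 * k)).2 i (by omega) v hv
    · have hv0 : v = 0 := by simpa [DAB.eq_bot_of_gt i (by omega)] using hv
      rw [hv0, map_zero]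
  have hJ1 : ∀ i, i % 2 = 1 → ∀ v ∈ DAB.sub i, J v = 0 := by
    intro i hpar v hv
    rw [hJ, LinearMap.sum_apply]
    exact Finset.sum_eq_zero fun k _ => (hE (2 * k)).2 i (by omega) v hv
  have key : ∀ S : Submodule F V,
      (∃ b, S ≤ ⨆ j, ⨆ _ : j % 2 = b % 2, DAB.sub j) → ∀ v ∈ S, J v = v ∨ J v = 0 := by
    rintro S ⟨b, hb⟩ v hv
    have hvW := hb hv
    rcases Nat.mod_two_eq_zero_or_one b with hb0 | hb1
    · left
      revert v
      have hW : (⨆ j, ⨆ _ : j % 2 = b % 2, DAB.sub j) ≤ LinearMap.ker (J - 1) := by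
        refine iSup_le fun j => iSup_le fun hj => fun w hw => ?_
        rw [LinearMap.mem_ker, LinearMap.sub_apply, Module.End.one_apply, sub_eq_zero]
        exact hJ0 j (by omega) w hw
      intro v hv hvW
      have hk := LinearMap.mem_ker.mp (hW hvW)
      rwa [LinearMap.sub_apply, Module.End.one_apply, sub_eq_zero] at hk
    · right
      have hW : (⨆ j, ⨆ _ : j % 2 = b % 2, DAB.sub j) ≤ LinearMap.ker J := by
        refine iSup_le fun j => iSup_le fun hj => fun w hw => ?_
        rw [LinearMap.mem_ker]
        exact hJ1 j (by omega) w hw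
      exact LinearMap.mem_ker.mp (hW hvW)
  have hscalP : ∀ i, ∀ v ∈ DAB.sub i, J v = v ∨ J v = 0 := fun i => key _ (hPalt i)
  have hscalQ : ∀ i, ∀ v ∈ DBC.sub i, J v = v ∨ J v = 0 := fun i => key _ (hQalt i)
  have hscalR : ∀ i, ∀ v ∈ DCA.sub i, J v = v ∨ J v = 0 := fun i => key _ (hRalt i)
  -- Step 7: stability of the tridiagonal space
  have hmem1 : ∀ X ∈ tridiagSpace DAB DBC DCA, X * J ∈ tridiagSpace DAB DBC DCA := by
    intro X hX
    obtain ⟨h1, h2, h3⟩ := hX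
    refine ⟨?_, ?_, ?_⟩
    · intro i v hv
      rw [Module.End.mul_apply]
      rcases hscalP i v hv with h | h
      · rw [h]; exact h1 i v hv
      · rw [h, map_zero]; exact Submodule.zero_mem _
    · intro i v hv
      rw [Module.End.mul_apply]
      rcases hscalQ i v hv with h | h
      · rw [h]; exact h2 i v hv
      · rw [h, map_zero]; exact Submodule.zero_mem _
    · intro i v hv
      rw [Module.End.mul_apply]
      rcases hscalR i v hv with h | h
      · rw [h]; exact h3 i v hv
      · rw [h, map_zero]; exact Submodule.zero_mem _
  have hmem2 : ∀ X ∈ tridiagSpace DAB DBC DCA, X * (1 - J) ∈ tridiagSpace DAB DBC DCA := by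
    intro X hX
    obtain ⟨h1, h2, h3⟩ := hX
    refine ⟨?_, ?_, ?_⟩
    · intro i v hv
      rw [Module.End.mul_apply, LinearMap.sub_apply, Module.End.one_apply]
      rcases hscalP i v hv with h | h
      · rw [h, sub_self, map_zero]; exact Submodule.zero_mem _
      · rw [h, sub_zero]; exact h1 i v hv
    · intro i v hv
      rw [Module.End.mul_apply, LinearMap.sub_apply, Module.End.one_apply]
      rcases hscalQ i v hv with h | h
      · rw [h, sub_self, map_zero]; exact Submodule.zero_mem _
      · rw [h, sub_zero]; exact h2 i v hv
    · intro i v hv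
      rw [Module.End.mul_apply, LinearMap.sub_apply, Module.End.one_apply]
      rcases hscalR i v hv with h | h
      · rw [h, sub_self, map_zero]; exact Submodule.zero_mem _
      · rw [h, sub_zero]; exact h3 i v hv
  have hJidem : J * J = J := by
    apply LinearMap.ext
    intro v
    have hv := LRAux.top_le DAB (LinearMap.ker (J * J - J)) ?_ v
    · have hk := LinearMap.mem_ker.mp hv
      rwa [LinearMap.sub_apply, sub_eq_zero] at hk
    · intro j hj w hw
      rw [LinearMap.mem_ker, LinearMap.sub_apply, sub_eq_zero, Module.End.mul_apply]
      rcases hscalP j w hw with h | h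
      · rw [h]; exact h
      · rw [h, map_zero]
  have hpart1 : Submodule.map (LinearMap.mulRight F J) (tridiagSpace DAB DBC DCA) ≤
      tridiagSpace DAB DBC DCA := by
    rintro Y ⟨X, hX, rfl⟩
    simpa only [LinearMap.mulRight_apply] using hmem1 X hX
  have hpart2 : Submodule.map (LinearMap.mulRight F (1 - J)) (tridiagSpace DAB DBC DCA) ≤
      tridiagSpace DAB DBC DCA := by
    rintro Y ⟨X, hX, rfl⟩
    simpa only [LinearMap.mulRight_apply] using hmem2 X hX
  refine ⟨hpart1, hpart2, ?_, ?_⟩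
  · apply le_antisymm (sup_le hpart1 hpart2)
    intro X hX
    rw [Submodule.mem_sup]
    refine ⟨X * J, ⟨X, hX, LinearMap.mulRight_apply _ _ _⟩,
      X * (1 - J), ⟨X, hX, LinearMap.mulRight_apply _ _ _⟩, ?_⟩
    rw [mul_sub, mul_one]
    abel
  · rw [Submodule.eq_bot_iff]
    rintro Y ⟨⟨X₁, hX₁, he₁⟩, ⟨X₂, hX₂, he₂⟩⟩
    rw [LinearMap.mulRight_apply] at he₁ he₂
    have h1 : Y * J = Y := by
      rw [← he₁, mul_assoc, hJidem]
    have h2 : Y * J = 0 := by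
      rw [← he₂, mul_assoc, sub_mul, one_mul, hJidem, sub_self, mul_zero]
    rw [← h1, h2]
end

section
/- Let (A,B,C) be a bipartite LR triple on V of diameter d = 2, with tridiagonal space 𝒳 and J as defined. Then 𝒳 has dimension 6; moreover J, AJ, BJ form a basis of the vector space 𝒳J = {XJ : X ∈ 𝒳}, and I−J, A(I−J), B(I−J) form a basis of the vector space 𝒳(I−J) = {X(I−J) : X ∈ 𝒳}. -/
variable {F : Type*} [Field F] {V : Type*} [AddCommGroup V] [Module F V]

/-!
Let `e₀, e₁, e₂` span the `(A,B)`-decomposition with `A e₂ = e₁`, `A e₁ = e₀`; then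
`B e₀ ∈ F e₁`, `B e₁ ∈ F e₂`, `B e₂ = 0`, and the vanishing of `a_i = tr (C E_i)` says that
`C` has zero diagonal in this basis. That forces the `(B,C)`- and `(C,A)`-decompositions to be
`(e₂, e₁, w)` and `(w, e₁, e₀)` with `w = C e₁ = p e₀ + u e₂`, `p u ≠ 0`. Hence `X ∈ 𝒳` iff
`X e₀ ∈ ⟨e₀, e₁⟩`, `X e₂ ∈ ⟨e₁, e₂⟩` and `X w ∈ ⟨w, e₁⟩`. The projection `J` onto `⟨e₀, e₂⟩`
along `e₁` fixes `e₀, e₂, w`, so `𝒳` is stable under right multiplication by `J` and splits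
as `𝒳J ⊕ 𝒳(1 - J)`; reading off matrix entries identifies the two summands with the spans of
`J, AJ, BJ` and of `1 - J, A(1 - J), B(1 - J)`, so `dim 𝒳 = 3 + 3`.
-/

open Submodule

section RightIdempotent

variable {K R : Type*} [Field K] [Ring R] [Algebra K R] {J : R}

lemma disjoint_map_mulRight_of_isIdempotentElem (hJ : IsIdempotentElem J) (P Q : Submodule K R) :
    Disjoint (P.map (LinearMap.mulRight K J)) (Q.map (LinearMap.mulRight K (1 - J))) := by
  rw [disjoint_iff_inf_le]
  rintro _ ⟨⟨X, -, rfl⟩, ⟨Y, -, hY⟩⟩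
  simp only [LinearMap.mulRight_apply] at hY ⊢
  calc X * J = X * J * J := by rw [mul_assoc, hJ.eq]
    _ = Y * (1 - J) * J := by rw [hY]
    _ = 0 := by rw [mul_assoc, sub_mul, one_mul, hJ.eq, sub_self, mul_zero]

lemma map_mulRight_sup_map_mulRight_one_sub {P : Submodule K R} (hP : ∀ X ∈ P, X * J ∈ P) :
    P.map (LinearMap.mulRight K J) ⊔ P.map (LinearMap.mulRight K (1 - J)) = P := by
  refine le_antisymm (sup_le ?_ ?_) fun X hX => ?_
  · rintro _ ⟨X, hX, rfl⟩
    exact hP X hX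
  · rintro _ ⟨X, hX, rfl⟩
    simpa [mul_sub] using P.sub_mem hX (hP X hX)
  · rw [show X = X * J + X * (1 - J) by noncomm_ring]
    exact add_mem_sup ⟨X, hX, rfl⟩ ⟨X, hX, rfl⟩

lemma finrank_eq_finrank_map_mulRight_add [FiniteDimensional K R] (hJ : IsIdempotentElem J)
    {P : Submodule K R} (hP : ∀ X ∈ P, X * J ∈ P) :
    Module.finrank K P = Module.finrank K (P.map (LinearMap.mulRight K J)) +
      Module.finrank K (P.map (LinearMap.mulRight K (1 - J))) := by
  have h := Submodule.finrank_sup_add_finrank_inf_eq (P.map (LinearMap.mulRight K J))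
    (P.map (LinearMap.mulRight K (1 - J)))
  rwa [map_mulRight_sup_map_mulRight_one_sub hP,
    (disjoint_map_mulRight_of_isIdempotentElem hJ P P).eq_bot, finrank_bot, add_zero] at h

lemma span_mul_le_map_mulRight {P : Submodule K R} {A B : R} (Y : R) (h1 : 1 ∈ P) (hA : A ∈ P)
    (hB : B ∈ P) :
    span K ({Y, A * Y, B * Y} : Set R) ≤ P.map (LinearMap.mulRight K Y) := by
  rw [span_le]
  rintro _ (rfl | rfl | rfl)
  · exact ⟨1, h1, one_mul _⟩
  · exact ⟨A, hA, rfl⟩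
  · exact ⟨B, hB, rfl⟩

lemma finrank_span_triple {M : Type*} [AddCommGroup M] [Module K M] {x y z : M}
    (h : LinearIndependent K ![x, y, z]) : Module.finrank K (span K ({x, y, z} : Set M)) = 3 := by
  have hrange : Set.range ![x, y, z] = {x, y, z} := by
    rw [Matrix.range_cons, Matrix.range_cons_cons_empty, Set.singleton_union]
  rw [← hrange, finrank_span_eq_card h, Fintype.card_fin]

end RightIdempotent

namespace LRDecomp

variable {d : ℕ} (D : LRDecomp F V d)

lemma sub_ne_bot {i : ℕ} (hi : i ≤ d) : D.sub i ≠ ⊥ := by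
  intro h
  have := D.finrank_eq_one i hi
  rw [h, finrank_bot] at this
  exact zero_ne_one this

lemma exists_eq_span_singleton {i : ℕ} (hi : i ≤ d) : ∃ v ≠ 0, D.sub i = span F {v} := by
  obtain ⟨⟨v, hvS⟩, hv0, hv⟩ := finrank_eq_one_iff'.1 (D.finrank_eq_one i hi)
  refine ⟨v, by simpa using hv0,
    le_antisymm (fun w hw => ?_) ((span_singleton_le_iff_mem _ _).2 hvS)⟩
  obtain ⟨c, hc⟩ := hv ⟨w, hw⟩
  exact mem_span_singleton.2 ⟨c, congrArg Subtype.val hc⟩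

lemma eq_span_singleton_of_le {i : ℕ} (hi : i ≤ d) {v : V} (hv : v ≠ 0)
    (h : D.sub i ≤ span F {v}) : D.sub i = span F {v} :=
  eq_of_le_of_finrank_eq h (by rw [D.finrank_eq_one i hi, finrank_span_singleton hv])

lemma linearIndependent_of_eq_span {f : Fin (d + 1) → V}
    (hf : ∀ i : Fin (d + 1), D.sub i = span F {f i}) : LinearIndependent F f :=
  D.isInternal.submodule_iSupIndep.linearIndependent _
    (fun i => hf i ▸ mem_span_singleton_self _)
    (fun i h => D.sub_ne_bot (Nat.lt_succ_iff.1 i.isLt) (by rw [hf i, h, span_zero_singleton]))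

lemma sup_sup_eq_top (D : LRDecomp F V 2) : D.sub 0 ⊔ D.sub 1 ⊔ D.sub 2 = ⊤ := by
  rw [← D.isInternal.submodule_iSup_eq_top]
  refine le_antisymm (sup_le (sup_le ?_ ?_) ?_) (iSup_le fun i => ?_)
  · exact le_iSup (fun i : Fin 3 => D.sub i) 0
  · exact le_iSup (fun i : Fin 3 => D.sub i) 1
  · exact le_iSup (fun i : Fin 3 => D.sub i) 2
  · fin_cases i
    · exact le_sup_left.trans le_sup_left
    · exact le_sup_right.trans le_sup_left
    · exact le_sup_right

lemma isTridiagonal_iff (D : LRDecomp F V 2) {f : Fin 3 → V}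
    (hf : ∀ i : Fin 3, D.sub i = span F {f i}) {X : Module.End F V} :
    IsTridiagonal X D ↔ X (f 0) ∈ span F {f 0, f 1} ∧ X (f 2) ∈ span F {f 1, f 2} := by
  have h0 : D.sub 0 = span F {f 0} := hf 0
  have h1 : D.sub 1 = span F {f 1} := hf 1
  have h2 : D.sub 2 = span F {f 2} := hf 2
  have h3 : D.sub 3 = ⊥ := D.eq_bot_of_gt 3 (by norm_num)
  have hpair : ∀ x y : V, span F {x, y} = span F {x} ⊔ span F {y} := fun x y => span_insert x {y}
  constructor
  · intro hX
    constructor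
    · simpa [h0, h1, hpair] using hX 0 (f 0) (h0 ▸ mem_span_singleton_self _)
    · simpa [h1, h2, h3, hpair] using hX 2 (f 2) (h2 ▸ mem_span_singleton_self _)
  · rintro ⟨hX0, hX2⟩ (_ | _ | _ | i) v hv
    · obtain ⟨c, rfl⟩ := mem_span_singleton.1 (h0 ▸ hv)
      simpa [h0, h1, hpair] using smul_mem _ c hX0
    · simp [D.sup_sup_eq_top]
    · obtain ⟨c, rfl⟩ := mem_span_singleton.1 (h2 ▸ hv)
      simpa [h1, h2, h3, hpair] using smul_mem _ c hX2
    · rw [D.eq_bot_of_gt _ (by omega), mem_bot] at hv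
      simp [hv]

end LRDecomp

lemma Lowers.sub_eq_span_apply {d : ℕ} {A : Module.End F V} {D : LRDecomp F V d}
    (hA : Lowers A D) {i : ℕ} (hi : i < d) {v : V} (hv : D.sub (i + 1) = span F {v}) :
    D.sub i = span F {A v} := by
  rw [← hA.2 i hi, hv, map_span, Set.image_singleton]

lemma Raises.sub_succ_eq_span_apply {d : ℕ} {B : Module.End F V} {D : LRDecomp F V d}
    (hB : Raises B D) {i : ℕ} (hi : i ≤ d) {v : V} (hv : D.sub i = span F {v}) :
    D.sub (i + 1) = span F {B v} := by
  rw [← hB i hi, hv, map_span, Set.image_singleton]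

lemma Raises.exists_apply_eq_smul {d : ℕ} {B : Module.End F V} {D : LRDecomp F V d}
    (hB : Raises B D) {i : ℕ} (hi : i ≤ d) {x y : V} (hx : D.sub i = span F {x})
    (hy : D.sub (i + 1) = span F {y}) : ∃ b : F, b ≠ 0 ∧ B x = b • y := by
  obtain ⟨z, hz⟩ :=
    span_singleton_eq_span_singleton.1 (hy.symm.trans (hB.sub_succ_eq_span_apply hi hx))
  exact ⟨z, z.ne_zero, hz.symm⟩

lemma LRDecomp.exists_basis_of_lowers (D : LRDecomp F V 2) (hdim : Module.finrank F V = 3)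
    {A : Module.End F V} (hA : Lowers A D) :
    ∃ e : Module.Basis (Fin 3) F V, (∀ i : Fin 3, D.sub i = span F {e i}) ∧
      A (e 0) = 0 ∧ A (e 1) = e 0 ∧ A (e 2) = e 1 := by
  obtain ⟨v, -, h2⟩ := D.exists_eq_span_singleton le_rfl
  have h1 := hA.sub_eq_span_apply (by norm_num) h2
  have h0 := hA.sub_eq_span_apply (by norm_num) h1
  have hf : ∀ i : Fin 3, D.sub i = span F {![A (A v), A v, v] i} := by
    intro i
    fin_cases i <;> assumption
  refine ⟨basisOfLinearIndependentOfCardEqFinrank (D.linearIndependent_of_eq_span hf)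
    (by simp [hdim]), ?_⟩
  simp only [coe_basisOfLinearIndependentOfCardEqFinrank]
  refine ⟨hf, ?_, rfl, rfl⟩
  have h := hA.1
  rw [h0, map_span, Set.image_singleton, span_singleton_eq_bot] at h
  exact h

section WeightedShift

variable (e : Module.Basis (Fin 3) F V) {T : Module.End F V} {a b : F}

lemma Module.Basis.apply_eq_of_weightedShift (h0 : T (e 0) = 0) (h1 : T (e 1) = a • e 0)
    (h2 : T (e 2) = b • e 1) (x : V) :
    T x = (e.repr x 1 * a) • e 0 + (e.repr x 2 * b) • e 1 := by
  conv_lhs => rw [← e.sum_repr x, Fin.sum_univ_three]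
  simp only [map_add, map_smul, h0, h1, h2, smul_zero, zero_add, smul_smul]

lemma Module.Basis.mem_span_zero_of_weightedShift (ha : a ≠ 0) (hb : b ≠ 0)
    (h0 : T (e 0) = 0) (h1 : T (e 1) = a • e 0) (h2 : T (e 2) = b • e 1) {x : V}
    (hx : T x = 0) : x ∈ span F {e 0} := by
  rw [e.apply_eq_of_weightedShift h0 h1 h2] at hx
  have c1 : e.repr x 1 = 0 := by simpa [ha] using congrArg (fun v => e.repr v 0) hx
  have c2 : e.repr x 2 = 0 := by simpa [hb] using congrArg (fun v => e.repr v 1) hx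
  rw [← e.sum_repr x, Fin.sum_univ_three, c1, c2, zero_smul, zero_smul, add_zero, add_zero]
  exact smul_mem _ _ (mem_span_singleton_self _)

lemma Module.Basis.mem_span_one_of_weightedShift (hb : b ≠ 0)
    (h0 : T (e 0) = 0) (h1 : T (e 1) = a • e 0) (h2 : T (e 2) = b • e 1) {y : V}
    (hy0 : e.repr y 0 = 0) (hy : T y ∈ span F {e 0}) : y ∈ span F {e 1} := by
  obtain ⟨k, hk⟩ := mem_span_singleton.1 hy
  rw [e.apply_eq_of_weightedShift h0 h1 h2] at hk
  have c2 : e.repr y 2 = 0 := by simpa [hb] using congrArg (fun v => e.repr v 1) hk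
  rw [← e.sum_repr y, Fin.sum_univ_three, hy0, c2, zero_smul, zero_smul, add_zero, zero_add]
  exact smul_mem _ _ (mem_span_singleton_self _)

end WeightedShift

lemma IsIdemSeq.apply_eq_ite {d : ℕ} {D : LRDecomp F V d} {E : ℕ → Module.End F V}
    (hE : IsIdemSeq D E) {f : Fin (d + 1) → V} (hf : ∀ i : Fin (d + 1), f i ∈ D.sub i)
    (i j : Fin (d + 1)) :
    E i (f j) = if j = i then f j else 0 := by
  split_ifs with h
  · subst h
    exact (hE j).1 _ (hf j)
  · exact (hE i).2 j (Fin.val_injective.ne h) _ (hf j)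

lemma trace_mul_eq_repr_of_apply_eq_ite {ι : Type*} [Fintype ι] [DecidableEq ι]
    (e : Module.Basis ι F V) (C P : Module.End F V) (i : ι)
    (hP : ∀ j, P (e j) = if j = i then e j else 0) :
    LinearMap.trace F V (C * P) = e.repr (C (e i)) i := by
  rw [LinearMap.trace_eq_matrix_trace F e, Matrix.trace, Finset.sum_eq_single i]
  · simp [LinearMap.toMatrix_apply, hP]
  · intro j _ hj
    simp [LinearMap.toMatrix_apply, hP, hj]
  · simp

section NormalForm

variable {A B C : Module.End F V} (e : Module.Basis (Fin 3) F V)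

lemma IsLRPairWith.sub_eq_span_of_raising_shift {D : LRDecomp F V 2}
    (hCA : IsLRPairWith C A D) (hA0 : A (e 0) = 0) (hA1 : A (e 1) = e 0) (hA2 : A (e 2) = e 1)
    (hC : e.repr (C (e 0)) 0 = 0) : D.sub 2 = span F {e 0} ∧ D.sub 1 = span F {e 1} := by
  have hA1' : A (e 1) = (1 : F) • e 0 := by rw [one_smul, hA1]
  have hA2' : A (e 2) = (1 : F) • e 1 := by rw [one_smul, hA2]
  have h2 : D.sub 2 = span F {e 0} := by
    refine D.eq_span_singleton_of_le le_rfl (e.ne_zero 0) fun z hz => ?_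
    refine e.mem_span_zero_of_weightedShift one_ne_zero one_ne_zero hA0 hA1' hA2' ?_
    have h := hCA.2 2 le_rfl
    rw [D.eq_bot_of_gt 3 (by norm_num)] at h
    have hAz := mem_map_of_mem (f := A) hz
    rwa [h, mem_bot] at hAz
  have h1 : D.sub 1 = span F {C (e 0)} := hCA.1.sub_eq_span_apply (by norm_num) h2
  refine ⟨h2, D.eq_span_singleton_of_le (by norm_num) (e.ne_zero 1) ?_⟩
  rw [h1, span_singleton_le_iff_mem]
  refine e.mem_span_one_of_weightedShift one_ne_zero hA0 hA1' hA2' hC ?_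
  rw [← h2, ← hCA.2 1 (by norm_num)]
  exact mem_map_of_mem (h1 ▸ mem_span_singleton_self _)

lemma IsLRPairWith.sub_eq_span_of_lowering_shift {D : LRDecomp F V 2} {b c : F}
    (hb : b ≠ 0) (hc : c ≠ 0) (hBC : IsLRPairWith B C D) (hB0 : B (e 0) = b • e 1)
    (hB1 : B (e 1) = c • e 2) (hB2 : B (e 2) = 0) (hC : e.repr (C (e 2)) 2 = 0) :
    D.sub 0 = span F {e 2} ∧ D.sub 1 = span F {e 1} := by
  -- `B` is a weighted shift for the reversed basis `e₂, e₁, e₀`.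
  set e' := e.reindex Fin.revPerm
  have he0 : e' 0 = e 2 := by simp [e']
  have he1 : e' 1 = e 1 := by simp [e']
  have he2 : e' 2 = e 0 := by simp [e']
  have hB0' : B (e' 0) = 0 := by rw [he0, hB2]
  have hB1' : B (e' 1) = c • e' 0 := by rw [he0, he1, hB1]
  have hB2' : B (e' 2) = b • e' 1 := by rw [he1, he2, hB0]
  have h0 : D.sub 0 = span F {e 2} := by
    refine D.eq_span_singleton_of_le (by norm_num) (e.ne_zero 2) fun z hz => ?_
    rw [← he0]
    refine e'.mem_span_zero_of_weightedShift hc hb hB0' hB1' hB2' ?_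
    have hBz := mem_map_of_mem (f := B) hz
    rwa [hBC.1.1, mem_bot] at hBz
  have h1 : D.sub 1 = span F {C (e 2)} := hBC.2.sub_succ_eq_span_apply (by norm_num) h0
  refine ⟨h0, D.eq_span_singleton_of_le (by norm_num) (e.ne_zero 1) ?_⟩
  rw [h1, span_singleton_le_iff_mem, ← he0, ← he1]
  refine e'.mem_span_one_of_weightedShift hb hB0' hB1' hB2' (by simpa [e'] using hC) ?_
  rw [he0, ← h0, ← hBC.1.2 0 (by norm_num)]
  exact mem_map_of_mem (h1 ▸ mem_span_singleton_self _)

lemma exists_sub_eq_span_of_isLRPairWith {DBC DCA : LRDecomp F V 2} {b c : F} (hb : b ≠ 0)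
    (hc : c ≠ 0) (hA0 : A (e 0) = 0) (hA1 : A (e 1) = e 0) (hA2 : A (e 2) = e 1)
    (hB0 : B (e 0) = b • e 1) (hB1 : B (e 1) = c • e 2) (hB2 : B (e 2) = 0)
    (hC : ∀ i, e.repr (C (e i)) i = 0) (hBC : IsLRPairWith B C DBC)
    (hCA : IsLRPairWith C A DCA) :
    ∃ p u : F, p ≠ 0 ∧ u ≠ 0 ∧
      (∀ i : Fin 3, DBC.sub i = span F {![e 2, e 1, p • e 0 + u • e 2] i}) ∧
      (∀ i : Fin 3, DCA.sub i = span F {![p • e 0 + u • e 2, e 1, e 0] i}) := by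
  obtain ⟨hDCA2, hDCA1⟩ := hCA.sub_eq_span_of_raising_shift e hA0 hA1 hA2 (hC 0)
  obtain ⟨hDBC0, hDBC1⟩ := hBC.sub_eq_span_of_lowering_shift e hb hc hB0 hB1 hB2 (hC 2)
  set p := e.repr (C (e 1)) 0
  set u := e.repr (C (e 1)) 2
  have hC1 : C (e 1) = p • e 0 + u • e 2 := by
    conv_lhs => rw [← e.sum_repr (C (e 1)), Fin.sum_univ_three, hC 1, zero_smul, add_zero]
  have hDBC2 : DBC.sub 2 = span F {p • e 0 + u • e 2} :=
    hC1 ▸ hBC.2.sub_succ_eq_span_apply (by norm_num) hDBC1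
  have hDCA0 : DCA.sub 0 = span F {p • e 0 + u • e 2} :=
    hC1 ▸ hCA.1.sub_eq_span_apply (by norm_num) hDCA1
  refine ⟨p, u, fun hp => DBC.sub_ne_bot (i := 1) (by norm_num) ?_,
    fun hu => DCA.sub_ne_bot (i := 1) (by norm_num) ?_,
    fun i => by fin_cases i <;> assumption, fun i => by fin_cases i <;> assumption⟩
  · rw [hBC.1.sub_eq_span_apply (by norm_num) hDBC2]
    simp [hp, hB2]
  · rw [hCA.2.sub_succ_eq_span_apply (by norm_num) hDCA0]
    simp [hu, hA0]

end NormalForm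

lemma one_mem_tridiagSpace {d : ℕ} (D₁ D₂ D₃ : LRDecomp F V d) :
    (1 : Module.End F V) ∈ tridiagSpace D₁ D₂ D₃ :=
  ⟨fun _ _ hv => mem_sup_left (mem_sup_right hv), fun _ _ hv => mem_sup_left (mem_sup_right hv),
    fun _ _ hv => mem_sup_left (mem_sup_right hv)⟩

section TridiagSpace

variable {D₁ D₂ D₃ : LRDecomp F V 2} {f : Fin 3 → V} {w : V}

lemma mem_tridiagSpace_iff (h₁ : ∀ i : Fin 3, D₁.sub i = span F {f i})
    (h₂ : ∀ i : Fin 3, D₂.sub i = span F {![f 2, f 1, w] i})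
    (h₃ : ∀ i : Fin 3, D₃.sub i = span F {![w, f 1, f 0] i}) {X : Module.End F V} :
    X ∈ tridiagSpace D₁ D₂ D₃ ↔
      X (f 0) ∈ span F {f 0, f 1} ∧ X (f 2) ∈ span F {f 1, f 2} ∧ X w ∈ span F {w, f 1} := by
  change IsTridiagonal X D₁ ∧ IsTridiagonal X D₂ ∧ IsTridiagonal X D₃ ↔ _
  rw [D₁.isTridiagonal_iff h₁, D₂.isTridiagonal_iff h₂, D₃.isTridiagonal_iff h₃]
  simp only [Matrix.cons_val_zero, Matrix.cons_val_one, Matrix.cons_val_two, Matrix.head_cons,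
    Matrix.tail_cons, Set.pair_comm (f 1)]
  tauto

lemma mem_tridiagSpace_of_apply_mem_span (h₁ : ∀ i : Fin 3, D₁.sub i = span F {f i})
    (h₂ : ∀ i : Fin 3, D₂.sub i = span F {![f 2, f 1, w] i})
    (h₃ : ∀ i : Fin 3, D₃.sub i = span F {![w, f 1, f 0] i}) (hw : w ∈ span F {f 0, f 2})
    {T : Module.End F V} (h0 : T (f 0) ∈ span F {f 1}) (h2 : T (f 2) ∈ span F {f 1}) :
    T ∈ tridiagSpace D₁ D₂ D₃ := by
  have hTw : T w ∈ span F {f 1} := by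
    obtain ⟨a, c, rfl⟩ := mem_span_pair.1 hw
    simpa using add_mem (smul_mem _ a h0) (smul_mem _ c h2)
  refine (mem_tridiagSpace_iff h₁ h₂ h₃).2 ⟨?_, ?_, ?_⟩
  · exact span_mono (Set.subset_insert _ _) h0
  · exact span_mono (Set.singleton_subset_iff.2 (Set.mem_insert _ _)) h2
  · exact span_mono (Set.subset_insert _ _) hTw

lemma mul_mem_tridiagSpace (h₁ : ∀ i : Fin 3, D₁.sub i = span F {f i})
    (h₂ : ∀ i : Fin 3, D₂.sub i = span F {![f 2, f 1, w] i})
    (h₃ : ∀ i : Fin 3, D₃.sub i = span F {![w, f 1, f 0] i}) {J : Module.End F V}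
    (hJ0 : J (f 0) = f 0) (hJ2 : J (f 2) = f 2) (hJw : J w = w) {X : Module.End F V}
    (hX : X ∈ tridiagSpace D₁ D₂ D₃) : X * J ∈ tridiagSpace D₁ D₂ D₃ := by
  rw [mem_tridiagSpace_iff h₁ h₂ h₃] at hX ⊢
  simpa [hJ0, hJ2, hJw] using hX

end TridiagSpace

section Model

variable (e : Module.Basis (Fin 3) F V) {A B J : Module.End F V} {b c : F}

lemma mul_mem_span_of_mem_span {p u : F} (hb : b ≠ 0) (hp : p ≠ 0) (hu : u ≠ 0)
    (hA0 : A (e 0) = 0) (hA2 : A (e 2) = e 1) (hB0 : B (e 0) = b • e 1) (hB2 : B (e 2) = 0)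
    (hJ0 : J (e 0) = e 0) (hJ1 : J (e 1) = 0) (hJ2 : J (e 2) = e 2) {X : Module.End F V}
    (hX0 : X (e 0) ∈ span F {e 0, e 1}) (hX2 : X (e 2) ∈ span F {e 1, e 2})
    (hXw : X (p • e 0 + u • e 2) ∈ span F {p • e 0 + u • e 2, e 1}) :
    X * J ∈ span F {J, A * J, B * J} := by
  obtain ⟨α, β, hαβ⟩ := mem_span_pair.1 hX0
  obtain ⟨γ, δ, hγδ⟩ := mem_span_pair.1 hX2
  obtain ⟨s, t, hst⟩ := mem_span_pair.1 hXw
  rw [map_add, map_smul, map_smul, ← hαβ, ← hγδ] at hst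
  -- The `e₀`- and `e₂`-coordinates of `X w` force `α = s = δ`.
  have c0 : s * p = p * α := by simpa using congrArg (fun v => e.repr v 0) hst
  have c2 : s * u = u * δ := by simpa using congrArg (fun v => e.repr v 2) hst
  obtain rfl : s = α := mul_left_cancel₀ hp (by linear_combination c0)
  obtain rfl : s = δ := mul_left_cancel₀ hu (by linear_combination c2)
  refine mem_span_triple.2 ⟨s, γ, β / b, e.ext fun i => ?_⟩
  fin_cases i
  · simp [hJ0, hA0, hB0, ← hαβ, smul_smul, hb]
  · simp [hJ1]
  · simp [hJ2, hA2, hB2, ← hγδ, add_comm]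

lemma mul_one_sub_mem_span (hc : c ≠ 0) (hA1 : A (e 1) = e 0) (hB1 : B (e 1) = c • e 2)
    (hJ0 : J (e 0) = e 0) (hJ1 : J (e 1) = 0) (hJ2 : J (e 2) = e 2) (X : Module.End F V) :
    X * (1 - J) ∈ span F {1 - J, A * (1 - J), B * (1 - J)} := by
  refine mem_span_triple.2
    ⟨e.repr (X (e 1)) 1, e.repr (X (e 1)) 0, e.repr (X (e 1)) 2 / c, e.ext fun i => ?_⟩
  fin_cases i
  · simp [hJ0]
  · have hX := e.sum_repr (X (e 1))
    rw [Fin.sum_univ_three] at hX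
    simpa [hJ1, hA1, hB1, smul_smul, hc, add_comm, add_left_comm] using hX
  · simp [hJ2]

lemma linearIndependent_mul_idem (hb : b ≠ 0) (hA0 : A (e 0) = 0) (hA2 : A (e 2) = e 1)
    (hB0 : B (e 0) = b • e 1) (hB2 : B (e 2) = 0) (hJ0 : J (e 0) = e 0) (hJ2 : J (e 2) = e 2) :
    LinearIndependent F ![J, A * J, B * J] := by
  refine Fintype.linearIndependent_iff.2 fun g hg => ?_
  have h00 := congrArg (fun T : Module.End F V => e.repr (T (e 0)) 0) hg
  have h01 := congrArg (fun T : Module.End F V => e.repr (T (e 0)) 1) hg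
  have h21 := congrArg (fun T : Module.End F V => e.repr (T (e 2)) 1) hg
  simp [Fin.sum_univ_three, hJ0, hJ2, hA0, hA2, hB0, hB2, hb] at h00 h01 h21
  intro i
  fin_cases i <;> assumption

lemma linearIndependent_mul_one_sub_idem (hc : c ≠ 0) (hA1 : A (e 1) = e 0)
    (hB1 : B (e 1) = c • e 2) (hJ1 : J (e 1) = 0) :
    LinearIndependent F ![1 - J, A * (1 - J), B * (1 - J)] := by
  refine Fintype.linearIndependent_iff.2 fun g hg => ?_
  have h0 := congrArg (fun T : Module.End F V => e.repr (T (e 1)) 0) hg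
  have h1 := congrArg (fun T : Module.End F V => e.repr (T (e 1)) 1) hg
  have h2 := congrArg (fun T : Module.End F V => e.repr (T (e 1)) 2) hg
  simp [Fin.sum_univ_three, hJ1, hA1, hB1, hc] at h0 h1 h2
  intro i
  fin_cases i <;> assumption

end Model

lemma tridiagSpace_split_of_basis (e : Module.Basis (Fin 3) F V)
    {A B J : Module.End F V} {b c p u : F} (hb : b ≠ 0) (hc : c ≠ 0) (hp : p ≠ 0) (hu : u ≠ 0)
    (hA0 : A (e 0) = 0) (hA1 : A (e 1) = e 0) (hA2 : A (e 2) = e 1)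
    (hB0 : B (e 0) = b • e 1) (hB1 : B (e 1) = c • e 2) (hB2 : B (e 2) = 0)
    (hJ0 : J (e 0) = e 0) (hJ1 : J (e 1) = 0) (hJ2 : J (e 2) = e 2) {DAB DBC DCA : LRDecomp F V 2}
    (hDAB : ∀ i : Fin 3, DAB.sub i = span F {e i})
    (hDBC : ∀ i : Fin 3, DBC.sub i = span F {![e 2, e 1, p • e 0 + u • e 2] i})
    (hDCA : ∀ i : Fin 3, DCA.sub i = span F {![p • e 0 + u • e 2, e 1, e 0] i}) :
    Module.finrank F (tridiagSpace DAB DBC DCA) = 6 ∧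
    LinearIndependent F ![J, A * J, B * J] ∧
    span F ({J, A * J, B * J} : Set (Module.End F V)) =
      (tridiagSpace DAB DBC DCA).map (LinearMap.mulRight F J) ∧
    LinearIndependent F ![1 - J, A * (1 - J), B * (1 - J)] ∧
    span F ({1 - J, A * (1 - J), B * (1 - J)} : Set (Module.End F V)) =
      (tridiagSpace DAB DBC DCA).map (LinearMap.mulRight F (1 - J)) := by
  have := Module.Finite.of_basis e
  have hw : p • e 0 + u • e 2 ∈ span F {e 0, e 2} := mem_span_pair.2 ⟨p, u, rfl⟩
  have hA := mem_tridiagSpace_of_apply_mem_span hDAB hDBC hDCA hw (T := A) (by simp [hA0])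
    (by simp [hA2, mem_span_singleton_self])
  have hB := mem_tridiagSpace_of_apply_mem_span hDAB hDBC hDCA hw (T := B)
    (by simp [hB0, smul_mem, mem_span_singleton_self]) (by simp [hB2])
  have h1 := one_mem_tridiagSpace DAB DBC DCA
  have hspan : span F {J, A * J, B * J} =
      (tridiagSpace DAB DBC DCA).map (LinearMap.mulRight F J) := by
    refine le_antisymm (span_mul_le_map_mulRight J h1 hA hB) ?_
    rintro _ ⟨X, hX, rfl⟩
    obtain ⟨hX0, hX2, hXw⟩ := (mem_tridiagSpace_iff hDAB hDBC hDCA).1 hX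
    exact mul_mem_span_of_mem_span e hb hp hu hA0 hA2 hB0 hB2 hJ0 hJ1 hJ2 hX0 hX2 hXw
  have hspan' : span F {1 - J, A * (1 - J), B * (1 - J)} =
      (tridiagSpace DAB DBC DCA).map (LinearMap.mulRight F (1 - J)) := by
    refine le_antisymm (span_mul_le_map_mulRight (1 - J) h1 hA hB) ?_
    rintro _ ⟨X, -, rfl⟩
    exact mul_one_sub_mem_span e hc hA1 hB1 hJ0 hJ1 hJ2 X
  have hind := linearIndependent_mul_idem e hb hA0 hA2 hB0 hB2 hJ0 hJ2
  have hind' := linearIndependent_mul_one_sub_idem e hc hA1 hB1 hJ1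
  have hJJ : IsIdempotentElem J := e.ext fun i => by fin_cases i <;> simp [hJ0, hJ1, hJ2]
  have hJX : ∀ X ∈ tridiagSpace DAB DBC DCA, X * J ∈ tridiagSpace DAB DBC DCA :=
    fun X => mul_mem_tridiagSpace hDAB hDBC hDCA hJ0 hJ2 (by simp [hJ0, hJ2])
  refine ⟨?_, hind, hspan, hind', hspan'⟩
  rw [finrank_eq_finrank_map_mulRight_add hJJ hJX, ← hspan, ← hspan', finrank_span_triple hind,
    finrank_span_triple hind']

theorem stmt3_general
    {F : Type*} [Field F] {V : Type*} [AddCommGroup V] [Module F V]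
    {d : ℕ} (hdim : Module.finrank F V = d + 1)
    (A B C : Module.End F V) (DAB DBC DCA : LRDecomp F V d)
    (hAB : IsLRPairWith A B DAB) (hBC : IsLRPairWith B C DBC) (hCA : IsLRPairWith C A DCA)
    (hd : d = 2)
    (E E' E'' : ℕ → Module.End F V)
    (hE : IsIdemSeq DAB E)
    (hbip : IsBipartite d A B C E E' E'')
    (J : Module.End F V) (hJ : J = ∑ j ∈ Finset.range (d / 2 + 1), E (2 * j)) :
    Module.finrank F (tridiagSpace DAB DBC DCA) = 6 ∧
    LinearIndependent F ![J, A * J, B * J] ∧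
    Submodule.span F ({J, A * J, B * J} : Set (Module.End F V)) = Submodule.map (LinearMap.mulRight F J) (tridiagSpace DAB DBC DCA) ∧
    LinearIndependent F ![1 - J, A * (1 - J), B * (1 - J)] ∧
    Submodule.span F ({1 - J, A * (1 - J), B * (1 - J)} : Set (Module.End F V)) = Submodule.map (LinearMap.mulRight F (1 - J)) (tridiagSpace DAB DBC DCA) := by
  subst hd
  obtain ⟨e, hDAB, hA0, hA1, hA2⟩ := DAB.exists_basis_of_lowers hdim hAB.1
  obtain ⟨b, hb, hB0⟩ := hAB.2.exists_apply_eq_smul (by norm_num) (hDAB 0) (hDAB 1)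
  obtain ⟨c, hc, hB1⟩ := hAB.2.exists_apply_eq_smul (by norm_num) (hDAB 1) (hDAB 2)
  have hB2 : B (e 2) = 0 := by
    have h := hAB.2.sub_succ_eq_span_apply le_rfl (hDAB 2)
    rwa [DAB.eq_bot_of_gt 3 (by norm_num), eq_comm, span_singleton_eq_bot] at h
  have hEe := hE.apply_eq_ite (f := e) fun i => hDAB i ▸ mem_span_singleton_self _
  have hC : ∀ i : Fin 3, e.repr (C (e i)) i = 0 := fun i =>
    (trace_mul_eq_repr_of_apply_eq_ite e C (E i) i (hEe i)).symm.trans (hbip i (by omega)).1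
  obtain ⟨p, u, hp, hu, hDBC, hDCA⟩ :=
    exists_sub_eq_span_of_isLRPairWith e hb hc hA0 hA1 hA2 hB0 hB1 hB2 hC hBC hCA
  have hJe : ∀ j : Fin 3, J (e j) = E (0 : Fin 3) (e j) + E (2 : Fin 3) (e j) := by
    simp [hJ, Finset.sum_range_succ]
  exact tridiagSpace_split_of_basis e hb hc hp hu hA0 hA1 hA2 hB0 hB1 hB2
    (by rw [hJe, hEe, hEe]; simp) (by rw [hJe, hEe, hEe]; simp) (by rw [hJe, hEe, hEe]; simp)
    hDAB hDBC hDCA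

theorem stmt3
    {F : Type*} [Field F] {V : Type*} [AddCommGroup V] [Module F V]
    [FiniteDimensional F V] {d : ℕ} (hdim : Module.finrank F V = d + 1)
    (A B C : Module.End F V) (DAB DBC DCA : LRDecomp F V d)
    (hAB : IsLRPairWith A B DAB) (hBC : IsLRPairWith B C DBC) (hCA : IsLRPairWith C A DCA)
    (hd : d = 2)
    (E E' E'' : ℕ → Module.End F V)
    (hE : IsIdemSeq DAB E) (hE' : IsIdemSeq DBC E') (hE'' : IsIdemSeq DCA E'')
    (hbip : IsBipartite d A B C E E' E'')
    (J : Module.End F V) (hJ : J = ∑ j ∈ Finset.range (d / 2 + 1), E (2 * j)) :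
    Module.finrank F (tridiagSpace DAB DBC DCA) = 6 ∧
    LinearIndependent F ![J, A * J, B * J] ∧
    Submodule.span F ({J, A * J, B * J} : Set (Module.End F V)) = Submodule.map (LinearMap.mulRight F J) (tridiagSpace DAB DBC DCA) ∧
    LinearIndependent F ![1 - J, A * (1 - J), B * (1 - J)] ∧
    Submodule.span F ({1 - J, A * (1 - J), B * (1 - J)} : Set (Module.End F V)) = Submodule.map (LinearMap.mulRight F (1 - J)) (tridiagSpace DAB DBC DCA) :=
  stmt3_general hdim A B C DAB DBC DCA hAB hBC hCA hd E E' E'' hE hbip J hJ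
end

section
/- Let (A,B,C) be an LR triple on V. Then the ten maps I, A, B, C, ABC, BCA, CAB, ACB, CBA, BAC (products denote composition) all belong to the tridiagonal space 𝒳 of (A,B,C). -/
variable {F : Type*} [Field F] {V : Type*} [AddCommGroup V] [Module F V]

/-! A map `X` is tridiagonal with respect to `{V_i}` as soon as it moves the flag
`V_0 + ⋯ + V_n` at most one step up and the flag `V_n + ⋯ + V_d` at most one step down: since the
sum is direct, the two flags through `X V_i` meet in `V_{i-1} + V_i + V_{i+1}`. Shifts add under
composition. On the `(A,B)`-decomposition, `A` shifts both flags down by one and `B` both up by one.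
For `C`, the flag `V_n + ⋯ + V_d = B^n V` is also the flag `V'_0 + ⋯ + V'_{d-n}` of the
`(B,C)`-decomposition, which `C` raises, and `V_0 + ⋯ + V_n = A^{d-n} V` is the flag
`V''_{d-n} + ⋯ + V''_d` of the `(C,A)`-decomposition, which `C` lowers. So `C` shifts the lower flag
up and the upper flag down, and every product of `A`, `B`, `C`, each used once, has exactly the
tridiagonal shifts. -/

theorem iSupIndep.biSup_inf_biSup {ι α : Type*} [CompleteLattice α] [IsModularLattice α]
    [IsCompactlyGenerated α] {f : ι → α} (hf : iSupIndep f) (s t : Set ι) :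
    (⨆ i ∈ s, f i) ⊓ (⨆ i ∈ t, f i) = ⨆ i ∈ s ∩ t, f i := by
  refine le_antisymm ?_ (le_inf (biSup_mono fun _ h => h.1) (biSup_mono fun _ h => h.2))
  have hdisj : Disjoint (⨆ i ∈ s \ t, f i) (⨆ i ∈ t, f i) :=
    hf.disjoint_biSup_biSup Set.disjoint_sdiff_left
  conv_lhs => rw [← Set.inter_union_sdiff s t, iSup_union]
  rw [sup_inf_assoc_of_le _ (biSup_mono fun _ h => h.2), hdisj.eq_bot, sup_bot_eq]

section MapsFlag

variable {R M : Type*} [Semiring R] [AddCommMonoid M] [Module R M]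

def MapsFlag (W : ℤ → Submodule R M) (X : Module.End R M) (a : ℤ) : Prop :=
  ∀ n, (W n).map X ≤ W (n + a)

variable {W W' : ℤ → Submodule R M} {X Y : Module.End R M} {a b : ℤ}

lemma mapsFlag_one (W : ℤ → Submodule R M) : MapsFlag W 1 0 := fun n => by
  rw [add_zero, Module.End.one_eq_id, Submodule.map_id]

lemma MapsFlag.mul (hX : MapsFlag W X a) (hY : MapsFlag W Y b) : MapsFlag W (X * Y) (b + a) :=
  fun n => by
    rw [Module.End.mul_eq_comp, Submodule.map_comp, ← add_assoc]
    exact (Submodule.map_mono (hY n)).trans (hX (n + b))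

lemma MapsFlag.mono (hW : Monotone W) (h : MapsFlag W X a) (hab : a ≤ b) : MapsFlag W X b :=
  fun n => (h n).trans (hW (by omega))

lemma MapsFlag.anti (hW : Antitone W) (h : MapsFlag W X a) (hba : b ≤ a) : MapsFlag W X b :=
  fun n => (h n).trans (hW (by omega))

lemma MapsFlag.reflect {c : ℤ} (hW : ∀ n, W n = W' (c - n)) (h : MapsFlag W' X a) :
    MapsFlag W X (-a) := fun n => by
  rw [hW, hW, show c - (n + -a) = c - n + a by ring]
  exact h (c - n)

end MapsFlag

namespace LRDecomp

variable {d : ℕ} (D : LRDecomp F V d)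

lemma iSupIndep_sub : iSupIndep D.sub := by
  have hlt : ∀ i : {i // D.sub i ≠ ⊥}, i.1 < d + 1 := fun i =>
    Nat.lt_succ_of_le (not_lt.1 fun h => i.2 (D.eq_bot_of_gt _ h))
  have := D.isInternal.submodule_iSupIndep.comp (f := fun i => (⟨i.1, hlt i⟩ : Fin (d + 1)))
    fun i j h => Subtype.ext (congrArg Fin.val h)
  exact iSupIndep_ne_bot.1 this

/-- `V_0 + ⋯ + V_n`. -/
def lowerFlag (n : ℤ) : Submodule F V := ⨆ j ∈ {j : ℕ | (j : ℤ) ≤ n}, D.sub j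

/-- `V_n + ⋯ + V_d`. -/
def upperFlag (n : ℤ) : Submodule F V := ⨆ j ∈ {j : ℕ | n ≤ (j : ℤ)}, D.sub j

variable {D}

lemma sub_le_lowerFlag {j : ℕ} {n : ℤ} (h : (j : ℤ) ≤ n) : D.sub j ≤ D.lowerFlag n :=
  le_biSup D.sub (show j ∈ {j : ℕ | (j : ℤ) ≤ n} from h)

lemma sub_le_upperFlag {j : ℕ} {n : ℤ} (h : n ≤ (j : ℤ)) : D.sub j ≤ D.upperFlag n :=
  le_biSup D.sub (show j ∈ {j : ℕ | n ≤ (j : ℤ)} from h)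

variable (D)

lemma lowerFlag_mono : Monotone D.lowerFlag := fun _ _ h =>
  biSup_mono fun _ hj => le_trans (α := ℤ) hj h

lemma upperFlag_anti : Antitone D.upperFlag := fun _ _ h =>
  biSup_mono fun _ hj => le_trans (α := ℤ) h hj

lemma lowerFlag_eq_top {n : ℤ} (h : (d : ℤ) ≤ n) : D.lowerFlag n = ⊤ := by
  rw [eq_top_iff, ← D.isInternal.submodule_iSup_eq_top]
  exact iSup_le fun i => sub_le_lowerFlag (by have := i.2; omega)

lemma upperFlag_eq_top {n : ℤ} (h : n ≤ 0) : D.upperFlag n = ⊤ := by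
  rw [eq_top_iff, ← D.isInternal.submodule_iSup_eq_top]
  exact iSup_le fun i => sub_le_upperFlag (by omega)

lemma lowerFlag_inf_upperFlag (i : ℕ) :
    D.lowerFlag (i + 1) ⊓ D.upperFlag (i - 1) ≤ D.sub (i - 1) ⊔ D.sub i ⊔ D.sub (i + 1) := by
  rw [lowerFlag, upperFlag, D.iSupIndep_sub.biSup_inf_biSup]
  refine iSup₂_le fun j hj => ?_
  obtain ⟨hj₁, hj₂⟩ : (j : ℤ) ≤ i + 1 ∧ (i : ℤ) - 1 ≤ j := hj
  obtain rfl | rfl | rfl : j = i - 1 ∨ j = i ∨ j = i + 1 := by omega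
  · exact le_sup_left.trans le_sup_left
  · exact le_sup_right.trans le_sup_left
  · exact le_sup_right

end LRDecomp

open LRDecomp

section

variable {d : ℕ} {D D' : LRDecomp F V d} {A B : Module.End F V}

lemma Raises.map_sub (hB : Raises B D) (j : ℕ) : (D.sub j).map B = D.sub (j + 1) := by
  rcases le_or_gt j d with h | h
  · exact hB j h
  · rw [D.eq_bot_of_gt j h, D.eq_bot_of_gt (j + 1) (by omega), Submodule.map_bot]

lemma Lowers.map_sub_le (hA : Lowers A D) (j : ℕ) : (D.sub j).map A ≤ D.sub (j - 1) := by
  rcases j with _ | j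
  · rw [hA.1]; exact bot_le
  rcases lt_or_ge j d with h | h
  · exact (hA.2 j h).le
  · rw [D.eq_bot_of_gt (j + 1) (by omega), Submodule.map_bot]; exact bot_le

lemma Raises.map_upperFlag (hB : Raises B D) {n : ℤ} (hn : 0 ≤ n) :
    (D.upperFlag n).map B = D.upperFlag (n + 1) := by
  simp only [upperFlag, Submodule.map_iSup, hB.map_sub]
  refine le_antisymm (iSup₂_le fun j hj => sub_le_upperFlag ?_) (iSup₂_le fun j hj => ?_)
  · push_cast; exact add_le_add_left hj 1
  have hj : n + 1 ≤ (j : ℤ) := hj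
  obtain ⟨k, rfl⟩ : ∃ k, j = k + 1 := ⟨j - 1, by omega⟩
  exact le_biSup (fun k => D.sub (k + 1)) (show n ≤ (k : ℤ) by push_cast at hj; omega)

lemma Lowers.map_lowerFlag (hA : Lowers A D) {n : ℤ} (hn : n ≤ d) :
    (D.lowerFlag n).map A = D.lowerFlag (n - 1) := by
  simp only [lowerFlag, Submodule.map_iSup]
  refine le_antisymm (iSup₂_le fun j hj => ?_) (iSup₂_le fun j hj => ?_)
  · have hj : (j : ℤ) ≤ n := hj
    rcases j with _ | j
    · rw [hA.1]; exact bot_le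
    · exact (hA.map_sub_le _).trans (sub_le_lowerFlag (by push_cast at hj; omega))
  · have hj : (j : ℤ) ≤ n - 1 := hj
    rw [← hA.2 j (by omega)]
    exact le_biSup (fun j => (D.sub j).map A)
      (show j + 1 ∈ {j : ℕ | (j : ℤ) ≤ n} from show ((j + 1 : ℕ) : ℤ) ≤ n by omega)

lemma Lowers.mapsFlag_lowerFlag (hA : Lowers A D) : MapsFlag D.lowerFlag A (-1) := fun n => by
  rcases le_or_gt n d with h | h
  · rw [hA.map_lowerFlag h, sub_eq_add_neg]
  · rw [D.lowerFlag_eq_top (n := n + -1) (by omega)]; exact le_top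

lemma Lowers.mapsFlag_upperFlag (hA : Lowers A D) : MapsFlag D.upperFlag A (-1) := fun n => by
  simp only [upperFlag, Submodule.map_iSup]
  exact iSup₂_le fun j hj => (hA.map_sub_le j).trans (sub_le_upperFlag (by
    have : n ≤ (j : ℤ) := hj; omega))

lemma Raises.mapsFlag_lowerFlag (hB : Raises B D) : MapsFlag D.lowerFlag B 1 := fun n => by
  simp only [lowerFlag, Submodule.map_iSup, hB.map_sub]
  exact iSup₂_le fun j hj => sub_le_lowerFlag (by have : (j : ℤ) ≤ n := hj; push_cast; omega)

lemma Raises.mapsFlag_upperFlag (hB : Raises B D) : MapsFlag D.upperFlag B 1 := fun n => by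
  simp only [upperFlag, Submodule.map_iSup, hB.map_sub]
  exact iSup₂_le fun j hj => sub_le_upperFlag (by have : n ≤ (j : ℤ) := hj; push_cast; omega)

/-- Both sides are `B^n V`. -/
lemma Raises.upperFlag_eq_lowerFlag (hR : Raises B D) (hL : Lowers B D') (n : ℤ) :
    D.upperFlag n = D'.lowerFlag (d - n) := by
  obtain hn | hn := le_total n 0
  · rw [D.upperFlag_eq_top hn, D'.lowerFlag_eq_top (by omega)]
  induction n, hn using Int.leInduction with
  | base => rw [D.upperFlag_eq_top le_rfl, D'.lowerFlag_eq_top (by omega)]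
  | succ m hm ih =>
    rw [← hR.map_upperFlag hm, ih, hL.map_lowerFlag (by omega), sub_add_eq_sub_sub]

lemma isTridiagonal_of_mapsFlag {X : Module.End F V} {a b : ℤ}
    (hlo : MapsFlag D.lowerFlag X a) (hup : MapsFlag D.upperFlag X b)
    (ha : a ≤ 1 := by norm_num) (hb : -1 ≤ b := by norm_num) :
    IsTridiagonal X D := fun i v hv => by
  have hlo' := (hlo.mono D.lowerFlag_mono ha) i
    (Submodule.mem_map_of_mem (sub_le_lowerFlag le_rfl hv))
  have hup' := (hup.anti D.upperFlag_anti hb) i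
    (Submodule.mem_map_of_mem (sub_le_upperFlag le_rfl hv))
  rw [← sub_eq_add_neg] at hup'
  exact D.lowerFlag_inf_upperFlag i ⟨hlo', hup'⟩

def tenMaps (A B C : Module.End F V) : Set (Module.End F V) :=
  {1, A, B, C, A * B * C, B * C * A, C * A * B, A * C * B, C * B * A, B * A * C}

lemma tenMaps_rotate (A B C : Module.End F V) : tenMaps B C A = tenMaps A B C := by
  ext X
  simp only [tenMaps, Set.mem_insert_iff, Set.mem_singleton_iff]
  tauto

variable {D₁ D₂ D₃ : LRDecomp F V d} {C : Module.End F V}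

lemma isTridiagonal_of_mem_tenMaps (hAB : IsLRPairWith A B D₁) (hBC : IsLRPairWith B C D₂)
    (hCA : IsLRPairWith C A D₃) {X : Module.End F V} (hX : X ∈ tenMaps A B C) :
    IsTridiagonal X D₁ := by
  have loA := hAB.1.mapsFlag_lowerFlag
  have upA := hAB.1.mapsFlag_upperFlag
  have loB := hAB.2.mapsFlag_lowerFlag
  have upB := hAB.2.mapsFlag_upperFlag
  have loC := hCA.1.mapsFlag_upperFlag.reflect (c := d) fun n => by
    rw [hCA.2.upperFlag_eq_lowerFlag hAB.1, sub_sub_cancel]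
  have upC := hBC.2.mapsFlag_lowerFlag.reflect (hAB.2.upperFlag_eq_lowerFlag hBC.1)
  rcases hX with rfl | rfl | rfl | rfl | rfl | rfl | rfl | rfl | rfl | rfl
  exacts [isTridiagonal_of_mapsFlag (mapsFlag_one _) (mapsFlag_one _),
    isTridiagonal_of_mapsFlag loA upA, isTridiagonal_of_mapsFlag loB upB,
    isTridiagonal_of_mapsFlag loC upC,
    isTridiagonal_of_mapsFlag ((loA.mul loB).mul loC) ((upA.mul upB).mul upC),
    isTridiagonal_of_mapsFlag ((loB.mul loC).mul loA) ((upB.mul upC).mul upA),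
    isTridiagonal_of_mapsFlag ((loC.mul loA).mul loB) ((upC.mul upA).mul upB),
    isTridiagonal_of_mapsFlag ((loA.mul loC).mul loB) ((upA.mul upC).mul upB),
    isTridiagonal_of_mapsFlag ((loC.mul loB).mul loA) ((upC.mul upB).mul upA),
    isTridiagonal_of_mapsFlag ((loB.mul loA).mul loC) ((upB.mul upA).mul upC)]

end

theorem stmt6_general
    {F : Type*} [Field F] {V : Type*} [AddCommGroup V] [Module F V]
    {d : ℕ}
    (A B C : Module.End F V) (DAB DBC DCA : LRDecomp F V d)
    (hAB : IsLRPairWith A B DAB) (hBC : IsLRPairWith B C DBC) (hCA : IsLRPairWith C A DCA) :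
    (1 : Module.End F V) ∈ tridiagSpace DAB DBC DCA ∧ A ∈ tridiagSpace DAB DBC DCA ∧ B ∈ tridiagSpace DAB DBC DCA ∧ C ∈ tridiagSpace DAB DBC DCA ∧
    A * B * C ∈ tridiagSpace DAB DBC DCA ∧ B * C * A ∈ tridiagSpace DAB DBC DCA ∧ C * A * B ∈ tridiagSpace DAB DBC DCA ∧
    A * C * B ∈ tridiagSpace DAB DBC DCA ∧ C * B * A ∈ tridiagSpace DAB DBC DCA ∧ B * A * C ∈ tridiagSpace DAB DBC DCA := by
  have h : ∀ X ∈ tenMaps A B C, X ∈ tridiagSpace DAB DBC DCA := fun X hX =>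
    ⟨isTridiagonal_of_mem_tenMaps hAB hBC hCA hX,
      isTridiagonal_of_mem_tenMaps hBC hCA hAB (by rwa [tenMaps_rotate]),
      isTridiagonal_of_mem_tenMaps hCA hAB hBC (by rwa [← tenMaps_rotate C A B])⟩
  refine ⟨h _ ?_, h _ ?_, h _ ?_, h _ ?_, h _ ?_, h _ ?_, h _ ?_, h _ ?_, h _ ?_, h _ ?_⟩ <;>
    simp only [tenMaps, Set.mem_insert_iff, Set.mem_singleton_iff, true_or, or_true]

theorem stmt6
    {F : Type*} [Field F] {V : Type*} [AddCommGroup V] [Module F V]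
    [FiniteDimensional F V] {d : ℕ} (hdim : Module.finrank F V = d + 1)
    (A B C : Module.End F V) (DAB DBC DCA : LRDecomp F V d)
    (hAB : IsLRPairWith A B DAB) (hBC : IsLRPairWith B C DBC) (hCA : IsLRPairWith C A DCA) :
    (1 : Module.End F V) ∈ tridiagSpace DAB DBC DCA ∧ A ∈ tridiagSpace DAB DBC DCA ∧ B ∈ tridiagSpace DAB DBC DCA ∧ C ∈ tridiagSpace DAB DBC DCA ∧
    A * B * C ∈ tridiagSpace DAB DBC DCA ∧ B * C * A ∈ tridiagSpace DAB DBC DCA ∧ C * A * B ∈ tridiagSpace DAB DBC DCA ∧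
    A * C * B ∈ tridiagSpace DAB DBC DCA ∧ C * B * A ∈ tridiagSpace DAB DBC DCA ∧ B * A * C ∈ tridiagSpace DAB DBC DCA :=
  stmt6_general A B C DAB DBC DCA hAB hBC hCA
end

section
/- Let (A,B,C) be an LR triple on V of diameter d = 2. Then the tridiagonal space 𝒳 of (A,B,C) has dimension at most 6. -/
variable {F : Type*} [Field F] {V : Type*} [AddCommGroup V] [Module F V]

/-!
A tridiagonal `X` sends the line `V₀` of each of the three decompositions into the plane
`V₀ + V₁`; these are three linear conditions on the 9-dimensional space `End V`, and it suffices
to see that they are independent. In diameter 2 the line `V₀` of the `(A,B)`-decomposition is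
`ker A`, which is also the line `V₂` of the `(C,A)`-decomposition, and the plane `V₀ + V₁` is
`range A`, which is also `V₁ + V₂` for the `(C,A)`-decomposition; similarly for `B` and `C`.
So with `x, y, z` spanning `ker A, ker B, ker C`, the rank-one map `w ↦ φ w • z` with
`φ x = 1`, `φ y = 0` violates the condition at `x` (as `z ∉ range A`) and satisfies the other
two; its cyclic shifts do the same for `y` and `z`.
-/

open Module

theorem Submodule.finrank_iInf_add_card_le {M : Type*} [AddCommGroup M] [Module F M]
    [FiniteDimensional F M] {ι : Type*} [Fintype ι] (K : ι → Submodule F M) (m : ι → M)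
    (hm : ∀ i, m i ∉ K i) (hm' : ∀ i j, j ≠ i → m i ∈ K j) :
    finrank F ↥(⨅ i, K i) + Fintype.card ι ≤ finrank F M := by
  classical
  have hli : LinearIndependent F fun i => (⨅ i, K i).mkQ (m i) := by
    refine Fintype.linearIndependent_iff.2 fun c hc i => ?_
    have hsum : ∑ j, c j • m j ∈ K i := by
      simp_rw [← map_smul, ← map_sum, ← LinearMap.mem_ker, Submodule.ker_mkQ,
        Submodule.mem_iInf] at hc
      exact hc i
    rw [← Finset.add_sum_erase _ _ (Finset.mem_univ i)] at hsum
    have hrest : ∑ j ∈ Finset.univ.erase i, c j • m j ∈ K i :=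
      Submodule.sum_mem _ fun j hj =>
        Submodule.smul_mem _ _ (hm' j i (Finset.ne_of_mem_erase hj).symm)
    by_contra hci
    exact hm i ((Submodule.smul_mem_iff _ hci).1 ((Submodule.add_mem_iff_left _ hrest).1 hsum))
  have := hli.fintype_card_le_finrank
  have := Submodule.finrank_quotient_add_finrank (⨅ i, K i)
  omega

theorem Submodule.finrank_inf_inf_add_three_le {M : Type*} [AddCommGroup M] [Module F M]
    [FiniteDimensional F M] {K₁ K₂ K₃ : Submodule F M} {m₁ m₂ m₃ : M}
    (h₁ : m₁ ∉ K₁ ∧ m₁ ∈ K₂ ∧ m₁ ∈ K₃) (h₂ : m₂ ∈ K₁ ∧ m₂ ∉ K₂ ∧ m₂ ∈ K₃)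
    (h₃ : m₃ ∈ K₁ ∧ m₃ ∈ K₂ ∧ m₃ ∉ K₃) :
    finrank F ↥(K₁ ⊓ K₂ ⊓ K₃) + 3 ≤ finrank F M := by
  have hK : ⨅ i, ![K₁, K₂, K₃] i = K₁ ⊓ K₂ ⊓ K₃ := by
    ext; simp [Submodule.mem_iInf, Fin.forall_fin_succ, and_assoc]
  have h := Submodule.finrank_iInf_add_card_le ![K₁, K₂, K₃] ![m₁, m₂, m₃]
    (by simp [Fin.forall_fin_succ, *]) (by simp [Fin.forall_fin_succ, *])
  rwa [hK, Fintype.card_fin] at h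

theorem exists_rankOne_apply_eq_of_notMem_span {x y : V} (hxy : x ∉ F ∙ y) (v : V) :
    ∃ X : Module.End F V, X x = v ∧ X y = 0 ∧ ∀ w, X w ∈ F ∙ v := by
  obtain ⟨f, hfx, hfy⟩ := Submodule.exists_dual_map_eq_bot_of_notMem hxy inferInstance
  have hfy : f y = 0 := by
    simpa [hfy] using Submodule.mem_map_of_mem (f := f) (Submodule.mem_span_singleton_self y)
  refine ⟨f.smulRight ((f x)⁻¹ • v), ?_, ?_, fun w => ?_⟩
  · simp [smul_smul, hfx]
  · simp [hfy]
  · simpa [smul_smul] using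
      Submodule.smul_mem _ (f w * (f x)⁻¹) (Submodule.mem_span_singleton_self v)

namespace LRDecomp

theorem finrank_eq {d : ℕ} (D : LRDecomp F V d) : finrank F V = d + 1 := by
  have hfin : ∀ i : Fin (d + 1), Module.Finite F (D.sub i) := fun i =>
    Module.finite_of_finrank_eq_succ (D.finrank_eq_one i i.is_le)
  rw [← (LinearEquiv.ofBijective (DirectSum.coeLinearMap _) D.isInternal).finrank_eq,
    Module.finrank_directSum]
  simp [fun i : Fin (d + 1) => D.finrank_eq_one i i.is_le]

variable {d : ℕ} (D : LRDecomp F V d)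

theorem disjoint_sub_sup {i j k : ℕ} (hij : i ≠ j) (hik : i ≠ k) :
    Disjoint (D.sub i) (D.sub j ⊔ D.sub k) := by
  rcases lt_or_ge d i with hi | hi
  · simp [D.eq_bot_of_gt i hi]
  have hle : ∀ l, i ≠ l →
      D.sub l ≤ ⨆ (l' : Fin (d + 1)) (_ : l' ≠ ⟨i, Nat.lt_succ_of_le hi⟩), D.sub l' := by
    intro l hil
    rcases lt_or_ge d l with hl | hl
    · simp [D.eq_bot_of_gt l hl]
    · exact le_iSup₂_of_le (⟨l, Nat.lt_succ_of_le hl⟩ : Fin (d + 1))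
        (by simpa [Fin.ext_iff] using hil.symm) le_rfl
  exact (D.isInternal.submodule_iSupIndep ⟨i, Nat.lt_succ_of_le hi⟩).mono_right
    (sup_le (hle j hij) (hle k hik))

theorem disjoint_sub {i j : ℕ} (hij : i ≠ j) : Disjoint (D.sub i) (D.sub j) :=
  (D.disjoint_sub_sup hij hij).mono_right le_sup_left

theorem exists_mem_ne_zero {i : ℕ} (hi : i ≤ d) : ∃ v ∈ D.sub i, v ≠ 0 :=
  Submodule.exists_mem_ne_zero_of_ne_bot fun h => by
    have h1 := D.finrank_eq_one i hi
    rw [h, finrank_bot] at h1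
    exact zero_ne_one h1

theorem finrank_sup_sub [FiniteDimensional F V] {i j : ℕ} (hi : i ≤ d) (hj : j ≤ d)
    (hij : i ≠ j) : finrank F ↥(D.sub i ⊔ D.sub j) = 2 := by
  have h := Submodule.finrank_sup_add_finrank_inf_eq (D.sub i) (D.sub j)
  rw [disjoint_iff.1 (D.disjoint_sub hij), finrank_bot, D.finrank_eq_one i hi,
    D.finrank_eq_one j hj] at h
  omega

end LRDecomp

theorem LRDecomp.sup_sub_eq_top (D : LRDecomp F V 2) : D.sub 0 ⊔ D.sub 1 ⊔ D.sub 2 = ⊤ := by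
  rw [← D.isInternal.submodule_iSup_eq_top]
  refine le_antisymm ?_ (iSup_le fun i => ?_)
  · exact sup_le (sup_le (le_iSup_of_le 0 le_rfl) (le_iSup_of_le 1 le_rfl))
      (le_iSup_of_le 2 le_rfl)
  · fin_cases i
    · exact le_sup_of_le_left le_sup_left
    · exact le_sup_of_le_left le_sup_right
    · exact le_sup_right

section DiameterTwo

variable {A : Module.End F V} {D D' : LRDecomp F V 2}

theorem Lowers.range_eq (h : Lowers A D) : LinearMap.range A = D.sub 0 ⊔ D.sub 1 := by
  rw [LinearMap.range_eq_map, ← D.sup_sub_eq_top, Submodule.map_sup, Submodule.map_sup, h.1,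
    h.2 0 (by norm_num), h.2 1 (by norm_num), bot_sup_eq]

theorem Raises.range_eq (h : Raises A D) : LinearMap.range A = D.sub 1 ⊔ D.sub 2 := by
  rw [LinearMap.range_eq_map, ← D.sup_sub_eq_top, Submodule.map_sup, Submodule.map_sup,
    h 0 (by norm_num), h 1 (by norm_num), h 2 le_rfl, D.eq_bot_of_gt 3 (by norm_num), sup_bot_eq]

theorem Lowers.sub_zero_eq_of_raises [FiniteDimensional F V] (hl : Lowers A D)
    (hr : Raises A D') : D.sub 0 = D'.sub 2 := by
  have hker : finrank F (LinearMap.ker A) = 1 := by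
    have h := LinearMap.finrank_range_add_finrank_ker A
    rw [hl.range_eq, D.finrank_sup_sub (by norm_num) (by norm_num) (by norm_num),
      D.finrank_eq] at h
    omega
  have hD : D.sub 0 = LinearMap.ker A :=
    Submodule.eq_of_le_of_finrank_le (LinearMap.le_ker_iff_map.2 hl.1)
      (by rw [hker, D.finrank_eq_one 0 (by norm_num)])
  have hD' : D'.sub 2 = LinearMap.ker A :=
    Submodule.eq_of_le_of_finrank_le
      (LinearMap.le_ker_iff_map.2 ((hr 2 le_rfl).trans (D'.eq_bot_of_gt 3 (by norm_num))))
      (by rw [hker, D'.finrank_eq_one 2 (by norm_num)])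
  exact hD.trans hD'.symm

theorem Lowers.exists_end_of_raises (hl : Lowers A D) (hr : Raises A D') {x y z : V}
    (hx : x ∈ D.sub 0) (hx0 : x ≠ 0) (hy : y ∈ D.sub 2) (hz : z ∈ D'.sub 0) (hz0 : z ≠ 0) :
    ∃ X : Module.End F V, X x ∉ D.sub 0 ⊔ D.sub 1 ∧ X y = 0 ∧ X z ∈ D'.sub 0 ⊔ D'.sub 1 := by
  have hxy : x ∉ F ∙ y := fun h => hx0 <| Submodule.disjoint_def.1 (D.disjoint_sub (by norm_num))
    x hx ((Submodule.span_singleton_le_iff_mem _ _).2 hy h)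
  have hzA : z ∉ D.sub 0 ⊔ D.sub 1 := by
    rw [← hl.range_eq, hr.range_eq]
    exact fun h => hz0 <|
      Submodule.disjoint_def.1 (D'.disjoint_sub_sup (by norm_num) (by norm_num)) z hz h
  obtain ⟨X, hXx, hXy, hXz⟩ := exists_rankOne_apply_eq_of_notMem_span hxy z
  refine ⟨X, hXx ▸ hzA, hXy, ?_⟩
  exact (Submodule.span_singleton_le_iff_mem _ _).2 (Submodule.mem_sup_left hz) (hXz z)

end DiameterTwo

theorem IsTridiagonal.apply_mem_of_mem_sub_zero {d : ℕ} {X : Module.End F V}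
    {D : LRDecomp F V d} (h : IsTridiagonal X D) {x : V} (hx : x ∈ D.sub 0) :
    X x ∈ D.sub 0 ⊔ D.sub 1 := by
  simpa using h 0 x hx

theorem stmt7_general
    {F : Type*} [Field F] {V : Type*} [AddCommGroup V] [Module F V]
    [FiniteDimensional F V] {d : ℕ}
    (A B C : Module.End F V) (DAB DBC DCA : LRDecomp F V d)
    (hAB : IsLRPairWith A B DAB) (hBC : IsLRPairWith B C DBC) (hCA : IsLRPairWith C A DCA)
    (hd : d = 2) :
    Module.finrank F (tridiagSpace DAB DBC DCA) ≤ 6 := by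
  subst hd
  obtain ⟨x, hx, hx0⟩ := DAB.exists_mem_ne_zero (i := 0) (by norm_num)
  obtain ⟨y, hy, hy0⟩ := DBC.exists_mem_ne_zero (i := 0) (by norm_num)
  obtain ⟨z, hz, hz0⟩ := DCA.exists_mem_ne_zero (i := 0) (by norm_num)
  have hxCA : x ∈ DCA.sub 2 := hAB.1.sub_zero_eq_of_raises hCA.2 ▸ hx
  have hyAB : y ∈ DAB.sub 2 := hBC.1.sub_zero_eq_of_raises hAB.2 ▸ hy
  have hzBC : z ∈ DBC.sub 2 := hCA.1.sub_zero_eq_of_raises hBC.2 ▸ hz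
  obtain ⟨X₁, h₁x, h₁y, h₁z⟩ := hAB.1.exists_end_of_raises hCA.2 hx hx0 hyAB hz hz0
  obtain ⟨X₂, h₂y, h₂z, h₂x⟩ := hBC.1.exists_end_of_raises hAB.2 hy hy0 hzBC hx hx0
  obtain ⟨X₃, h₃z, h₃x, h₃y⟩ := hCA.1.exists_end_of_raises hBC.2 hz hz0 hxCA hy hy0
  let K₁ := (DAB.sub 0 ⊔ DAB.sub 1).comap (LinearMap.applyₗ x)
  let K₂ := (DBC.sub 0 ⊔ DBC.sub 1).comap (LinearMap.applyₗ y)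
  let K₃ := (DCA.sub 0 ⊔ DCA.sub 1).comap (LinearMap.applyₗ z)
  have hle : tridiagSpace DAB DBC DCA ≤ K₁ ⊓ K₂ ⊓ K₃ := fun X ⟨h₁, h₂, h₃⟩ =>
    ⟨⟨h₁.apply_mem_of_mem_sub_zero hx, h₂.apply_mem_of_mem_sub_zero hy⟩,
      h₃.apply_mem_of_mem_sub_zero hz⟩
  have hcodim := Submodule.finrank_inf_inf_add_three_le (K₁ := K₁) (K₂ := K₂) (K₃ := K₃)
    ⟨h₁x, by simp [K₂, h₁y], h₁z⟩ ⟨h₂x, h₂y, by simp [K₃, h₂z]⟩ ⟨by simp [K₁, h₃x], h₃y, h₃z⟩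
  have hEnd : finrank F (V →ₗ[F] V) = 9 := by rw [Module.finrank_linearMap, DAB.finrank_eq]
  calc finrank F (tridiagSpace DAB DBC DCA) ≤ finrank F ↥(K₁ ⊓ K₂ ⊓ K₃) :=
        Submodule.finrank_mono hle
    _ ≤ 6 := by omega

theorem stmt7
    {F : Type*} [Field F] {V : Type*} [AddCommGroup V] [Module F V]
    [FiniteDimensional F V] {d : ℕ} (hdim : Module.finrank F V = d + 1)
    (A B C : Module.End F V) (DAB DBC DCA : LRDecomp F V d)
    (hAB : IsLRPairWith A B DAB) (hBC : IsLRPairWith B C DBC) (hCA : IsLRPairWith C A DCA)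
    (hd : d = 2) :
    Module.finrank F (tridiagSpace DAB DBC DCA) ≤ 6 :=
  stmt7_general A B C DAB DBC DCA hAB hBC hCA hd
end

section
/- Let (A,B,C) be a bipartite normalized LR triple on V of diameter d ≥ 4, with Toeplitz parameters {α_i} for T and {β_i} for T⁻¹. Then α_{2i}² ≠ α_{2i−2}α_{2i+2} and β_{2i}² ≠ β_{2i−2}β_{2i+2} for 1 ≤ i ≤ d/2 − 1. -/
variable {F : Type*} [Field F] {V : Type*} [AddCommGroup V] [Module F V]

/-!
Let `u = u₁` be the `(C,B)`-basis and `w = w₁` the compatible `(C,A)`-basis, so that `w = u α`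
and `u = w β`. As `A` raises the `(C,A)`-decomposition, `A w_j = r_j w_{j+1}` with `r_j ≠ 0` for
`j < d` and `r_d = 0`. In the basis `u` the map `A` is tridiagonal, because the flags of the
`(B,C)`-decomposition are images of powers of `C` and of `B`, hence also flags of the `(C,A)`- and
`(A,B)`-decompositions; and its diagonal vanishes, because the diagonal entries are the traces
`a'_i`. Expanding `A w_j = ∑ α_{j-i} A u_i` in the basis `u` thus relates `α`, `r` and the two
off-diagonals of `A`. These relations force every `α_{2k}` to be nonzero, and the coordinates
`d - 2i - 1` of `A w_d` and `A w_{d-2}` combine to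
`r_{d-2} α_{2i}^2 = r_{d-2i-2} (α_{2i}^2 - α_{2i-2} α_{2i+2})`, which rules out equality.
The same argument for `B`, which raises `u` and is tridiagonal with zero diagonal in the basis `w`,
applies to `β`; there `β_2 = -1` since `α_1 = 0` and `α_2 = 1`.
-/

open Submodule Finset

namespace LRDecomp

variable {d : ℕ} (D : LRDecomp F V d)

theorem iSup_sub_eq_top : ⨆ i : Fin (d + 1), D.sub i = ⊤ :=
  D.isInternal.submodule_iSup_eq_top

def flagGE (k : ℕ) : Submodule F V := ⨆ (i : Fin (d + 1)) (_ : k ≤ (i : ℕ)), D.sub i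

def flagLE (k : ℕ) : Submodule F V := ⨆ (i : Fin (d + 1)) (_ : (i : ℕ) ≤ k), D.sub i

theorem sub_le_flagGE {k j : ℕ} (hj : j ≤ d) (h : k ≤ j) : D.sub j ≤ D.flagGE k :=
  le_iSup₂_of_le (⟨j, by omega⟩ : Fin (d + 1)) h le_rfl

theorem sub_le_flagLE {k j : ℕ} (hj : j ≤ d) (h : j ≤ k) : D.sub j ≤ D.flagLE k :=
  le_iSup₂_of_le (⟨j, by omega⟩ : Fin (d + 1)) h le_rfl

theorem flagGE_zero : D.flagGE 0 = ⊤ :=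
  eq_top_iff.2 <| D.iSup_sub_eq_top ▸ iSup_le fun i => D.sub_le_flagGE i.is_le (Nat.zero_le _)

theorem flagLE_of_le {k : ℕ} (h : d ≤ k) : D.flagLE k = ⊤ :=
  eq_top_iff.2 <| D.iSup_sub_eq_top ▸ iSup_le fun i => D.sub_le_flagLE i.is_le (i.is_le.trans h)

theorem sub_eq_span_singleton {k : ℕ} (hk : k ≤ d) {x : V} (hx : x ∈ D.sub k)
    (hx0 : x ≠ 0) : D.sub k = F ∙ x := by
  have := Module.finite_of_finrank_eq_succ (D.finrank_eq_one k hk)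
  refine (eq_of_le_of_finrank_le ((span_singleton_le_iff_mem _ _).2 hx) ?_).symm
  rw [finrank_span_singleton hx0, D.finrank_eq_one k hk]

theorem exists_smul_of_map_eq {X : Module.End F V} {j k : ℕ} (hj : j ≤ d) (hk : k ≤ d)
    (h : (D.sub j).map X = D.sub k) {x y : V} (hx : x ∈ D.sub j) (hx0 : x ≠ 0)
    (hy : y ∈ D.sub k) (hy0 : y ≠ 0) : ∃ t : F, t ≠ 0 ∧ X x = t • y := by
  have hXx : X x ∈ D.sub k := h ▸ mem_map_of_mem hx
  obtain ⟨t, ht⟩ := mem_span_singleton.1 (D.sub_eq_span_singleton hk hy hy0 ▸ hXx)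
  refine ⟨t, fun ht0 => ?_, ht.symm⟩
  have hbot : D.sub k = ⊥ := by
    rw [← h, D.sub_eq_span_singleton hj hx hx0, map_span, Set.image_singleton, ← ht, ht0,
      zero_smul, span_zero_singleton]
  have := D.finrank_eq_one k hk
  rw [hbot, finrank_bot] at this
  exact zero_ne_one this

theorem exists_basis (v : ℕ → V) (e : Equiv.Perm (Fin (d + 1)))
    (hv : ∀ i : Fin (d + 1), v i ∈ D.sub (e i)) (hv0 : ∀ i : Fin (d + 1), v i ≠ 0) :
    ∃ b : Module.Basis (Fin (d + 1)) F V, ∀ i, b i = v i := by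
  have hli : LinearIndependent F fun i : Fin (d + 1) => v i :=
    (D.isInternal.submodule_iSupIndep.comp e.injective).linearIndependent _ hv hv0
  have hsp : ⊤ ≤ span F (Set.range fun i : Fin (d + 1) => v i) := by
    rw [span_range_eq_iSup, ← D.iSup_sub_eq_top, ← e.iSup_comp]
    exact iSup_mono fun i => (D.sub_eq_span_singleton (e i).is_le (hv i) (hv0 i)).le
  exact ⟨Module.Basis.mk hli hsp, fun i => Module.Basis.mk_apply hli hsp i⟩

section Basis

variable {D} (b : Module.Basis (Fin (d + 1)) F V) (e : Equiv.Perm (Fin (d + 1)))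

theorem trace_mul_eq_repr {E : ℕ → Module.End F V} (hE : IsIdemSeq D E)
    (hb : ∀ i, b i ∈ D.sub (e i)) (X : Module.End F V) (k : Fin (d + 1)) :
    LinearMap.trace F V (X * E (e k)) = b.repr (X (b k)) k := by
  rw [LinearMap.trace_eq_matrix_trace F b, Matrix.trace,
    Finset.sum_eq_single_of_mem k (Finset.mem_univ k) fun i _ hik => ?_]
  · rw [Matrix.diag_apply, LinearMap.toMatrix_apply, Module.End.mul_apply,
      (hE (e k)).1 (b k) (hb k)]
  · rw [Matrix.diag_apply, LinearMap.toMatrix_apply, Module.End.mul_apply,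
      (hE (e k)).2 (e i) (fun h => hik (e.injective (Fin.ext h))) (b i) (hb i), map_zero, map_zero,
      Finsupp.zero_apply]

theorem repr_eq_zero_of_mem_iSup (hb : ∀ i, b i ∈ D.sub (e i)) (p : ℕ → Prop) {v : V}
    (hv : v ∈ ⨆ (i : Fin (d + 1)) (_ : p i), D.sub i) {m : Fin (d + 1)} (hm : ¬ p (e m)) :
    b.repr v m = 0 := by
  have hle : ⨆ (i : Fin (d + 1)) (_ : p i), D.sub i ≤ span F (b '' {i | p (e i)}) := by
    refine iSup₂_le fun i hi => ?_
    have hbi : b (e.symm i) ∈ D.sub i := by simpa using hb (e.symm i)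
    rw [D.sub_eq_span_singleton i.is_le hbi (b.ne_zero _)]
    exact span_mono (Set.singleton_subset_iff.2 ⟨e.symm i, by simpa using hi, rfl⟩)
  by_contra hne
  exact hm ((b.mem_span_image.1 (hle hv)) (Finsupp.mem_support_iff.2 hne))

theorem repr_map_eq_zero_of_not_adjacent {X : Module.End F V}
    (hX : ∀ t ≤ d, (D.sub t).map X ≤ D.flagGE (t - 1) ⊓ D.flagLE (t + 1))
    {E : ℕ → Module.End F V} (hE : IsIdemSeq D E)
    (htr : ∀ k ≤ d, LinearMap.trace F V (X * E k) = 0) (hb : ∀ i, b i ∈ D.sub (e i))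
    {i m : Fin (d + 1)} (h₁ : (e m : ℕ) + 1 ≠ e i) (h₂ : (e i : ℕ) + 1 ≠ e m) :
    b.repr (X (b i)) m = 0 := by
  have hXb : X (b i) ∈ D.flagGE (e i - 1) ⊓ D.flagLE (e i + 1) :=
    hX (e i) (e i).is_le (mem_map_of_mem (hb i))
  rcases lt_trichotomy (e m : ℕ) (e i) with hlt | heq | hgt
  · exact repr_eq_zero_of_mem_iSup b e hb (e i - 1 ≤ ·) hXb.1 (by omega)
  · obtain rfl : m = i := e.injective (Fin.ext heq)
    rw [← trace_mul_eq_repr b e hE hb, htr _ (e m).is_le]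
  · exact repr_eq_zero_of_mem_iSup b e hb (· ≤ e i + 1) hXb.2 (by omega)

end Basis

end LRDecomp

namespace Raises

variable {d : ℕ} {Y : Module.End F V} {D : LRDecomp F V d}

theorem map_pow_sub (h : Raises Y D) (n j : ℕ) : (D.sub j).map (Y ^ n) = D.sub (j + n) := by
  induction n generalizing j with
  | zero => rw [pow_zero, Module.End.one_eq_id, Submodule.map_id, add_zero]
  | succ n ih =>
    have hY : (D.sub j).map Y = D.sub (j + 1) := by
      rcases le_or_gt j d with hj | hj
      · exact h j hj
      · rw [D.eq_bot_of_gt j hj, Submodule.map_bot, D.eq_bot_of_gt (j + 1) (by omega)]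
    rw [pow_succ, Module.End.mul_eq_comp, map_comp, hY, ih, Nat.add_right_comm, add_assoc]

theorem map_pow_top (h : Raises Y D) (k : ℕ) :
    (⊤ : Submodule F V).map (Y ^ k) = D.flagGE k := by
  rw [← D.iSup_sub_eq_top, Submodule.map_iSup]
  refine le_antisymm (iSup_le fun i => ?_) (iSup₂_le fun i hki => ?_)
  · rw [h.map_pow_sub]
    rcases le_or_gt ((i : ℕ) + k) d with hik | hik
    · exact D.sub_le_flagGE hik (by omega)
    · rw [D.eq_bot_of_gt _ hik]; exact bot_le
  · refine le_iSup_of_le (⟨(i : ℕ) - k, by omega⟩ : Fin (d + 1)) ?_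
    rw [h.map_pow_sub, Nat.sub_add_cancel hki]

theorem map_flagLE_le (h : Raises Y D) (t : ℕ) : (D.flagLE t).map Y ≤ D.flagLE (t + 1) := by
  rw [LRDecomp.flagLE, Submodule.map_iSup]
  refine iSup_le fun i => ?_
  rw [Submodule.map_iSup]
  refine iSup_le fun hit => ?_
  rw [h i i.is_le]
  rcases le_or_gt ((i : ℕ) + 1) d with h1 | h1
  · exact D.sub_le_flagLE h1 (by omega)
  · rw [D.eq_bot_of_gt _ h1]; exact bot_le

end Raises

namespace Lowers

variable {d : ℕ} {X : Module.End F V} {D : LRDecomp F V d}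

theorem map_pow_sub (h : Lowers X D) (n : ℕ) {j : ℕ} (hj : j ≤ d) :
    (D.sub j).map (X ^ n) = if n ≤ j then D.sub (j - n) else ⊥ := by
  induction n generalizing j with
  | zero =>
    rw [pow_zero, Module.End.one_eq_id, Submodule.map_id, if_pos (Nat.zero_le j), Nat.sub_zero]
  | succ n ih =>
    rw [pow_succ, Module.End.mul_eq_comp, map_comp]
    rcases j with _ | k
    · rw [h.1, Submodule.map_bot, if_neg (by omega)]
    · rw [h.2 k (by omega), ih (by omega)]
      split_ifs <;> first | omega | rfl | rw [Nat.add_sub_add_right]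

theorem map_pow_top (h : Lowers X D) {k : ℕ} (hk : k ≤ d) :
    (⊤ : Submodule F V).map (X ^ k) = D.flagLE (d - k) := by
  rw [← D.iSup_sub_eq_top, Submodule.map_iSup]
  refine le_antisymm (iSup_le fun i => ?_) (iSup₂_le fun i hik => ?_)
  · rw [h.map_pow_sub k i.is_le]
    split_ifs with hki
    · exact D.sub_le_flagLE (by omega) (by omega)
    · exact bot_le
  · refine le_iSup_of_le (⟨(i : ℕ) + k, by omega⟩ : Fin (d + 1)) ?_
    rw [h.map_pow_sub k (by simp only; omega), if_pos (by simp only; omega), Nat.add_sub_cancel]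

theorem map_flagGE_le (h : Lowers X D) (t : ℕ) : (D.flagGE t).map X ≤ D.flagGE (t - 1) := by
  rw [LRDecomp.flagGE, Submodule.map_iSup]
  refine iSup_le fun i => ?_
  rw [Submodule.map_iSup]
  refine iSup_le fun hti => ?_
  rcases hi : (i : ℕ) with _ | m
  · rw [h.1]; exact bot_le
  · rw [h.2 m (by omega)]
    exact D.sub_le_flagGE (by omega) (by omega)

end Lowers

theorem map_sub_le_flagGE_inf_flagLE {d : ℕ} {A B C : Module.End F V}
    {DAB DBC DCA : LRDecomp F V d} (hAB : IsLRPairWith A B DAB) (hBC : IsLRPairWith B C DBC)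
    (hCA : IsLRPairWith C A DCA) (t : ℕ) (ht : t ≤ d) :
    (DBC.sub t).map A ≤ DBC.flagGE (t - 1) ⊓ DBC.flagLE (t + 1) := by
  have hGE : ∀ k ≤ d, DBC.flagGE k = DCA.flagLE (d - k) := fun k hk => by
    rw [← hBC.2.map_pow_top, hCA.1.map_pow_top hk]
  have hLE : ∀ k ≤ d, DBC.flagLE k = DAB.flagGE (d - k) := fun k hk => by
    rw [← hAB.2.map_pow_top, hBC.1.map_pow_top (by omega : d - k ≤ d), Nat.sub_sub_self hk]
  refine le_inf ?_ ?_
  · rcases Nat.eq_zero_or_pos t with rfl | ht0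
    · rw [Nat.zero_sub, DBC.flagGE_zero]; exact le_top
    · calc (DBC.sub t).map A ≤ (DCA.flagLE (d - t)).map A :=
            map_mono (hGE t ht ▸ DBC.sub_le_flagGE ht le_rfl)
        _ ≤ DCA.flagLE (d - t + 1) := hCA.2.map_flagLE_le _
        _ = DBC.flagGE (t - 1) := by rw [hGE (t - 1) (by omega)]; congr 1; omega
  · rcases eq_or_lt_of_le ht with rfl | htd
    · rw [DBC.flagLE_of_le (by omega)]; exact le_top
    · calc (DBC.sub t).map A ≤ (DAB.flagGE (d - t)).map A :=
            map_mono (hLE t ht ▸ DBC.sub_le_flagLE ht le_rfl)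
        _ ≤ DAB.flagGE (d - t - 1) := hAB.1.map_flagGE_le _
        _ = DBC.flagLE (t + 1) := by rw [hLE (t + 1) htd, Nat.sub_sub]

section NatCoord

variable {d : ℕ} (b : Module.Basis (Fin (d + 1)) F V)

noncomputable def natCoord (m : ℕ) : V →ₗ[F] F :=
  if h : m < d + 1 then b.coord ⟨m, h⟩ else 0

theorem natCoord_apply (m : Fin (d + 1)) (v : V) : natCoord b m v = b.repr v m := by
  rw [natCoord, dif_pos m.isLt, Module.Basis.coord_apply]

theorem natCoord_of_lt {m : ℕ} (h : d < m) : natCoord b m = 0 :=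
  dif_neg (by omega)

variable {b} {x : ℕ → V} (hbx : ∀ i : Fin (d + 1), b i = x i)
include hbx

theorem natCoord_self {i : ℕ} (hi : i ≤ d) (m : ℕ) :
    natCoord b m (x i) = if i = m then 1 else 0 := by
  rcases le_or_gt m d with hm | hm
  · rw [← hbx ⟨i, by omega⟩, natCoord_apply b ⟨m, by omega⟩, b.repr_self,
      Finsupp.single_apply]
    simp only [Fin.mk.injEq]
  · rw [natCoord_of_lt b hm, if_neg (by omega), LinearMap.zero_apply]

theorem natCoord_sum_smul (f : ℕ → F) {t : ℕ} (ht : t ≤ d) (m : ℕ) :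
    natCoord b m (∑ i ∈ range (t + 1), f i • x i) = if m ≤ t then f m else 0 := by
  rw [map_sum, Finset.sum_congr rfl fun i hi => by
    rw [map_smul, natCoord_self hbx (by rw [mem_range] at hi; omega), smul_eq_mul, mul_ite,
      mul_one, mul_zero], Finset.sum_ite_eq']
  simp only [mem_range, Nat.lt_succ_iff]

end NatCoord

/-- The relations satisfied by the parameters `γ` of a Toeplitz transition `y = x γ`, the
scalars `r` of a map `X` raising `y` (`X y_j = r_j y_{j+1}`, `r_d = 0`), and the matrix
`c i m` of `X` in the basis `x`, when that matrix has zero diagonal and is tridiagonal. -/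
structure ChainRelation {K : Type*} [Field K] (d : ℕ) (γ r : ℕ → K) (c : ℕ → ℕ → K) :
    Prop where
  r_ne_zero : ∀ j < d, r j ≠ 0
  r_self : r d = 0
  c_eq_zero : ∀ i ≤ d, ∀ m, m + 1 ≠ i → i + 1 ≠ m → c i m = 0
  sum_eq : ∀ j ≤ d, ∀ m ≤ d,
    ∑ i ∈ range (j + 1), γ (j - i) * c i m = if m ≤ j + 1 then r j * γ (j + 1 - m) else 0

namespace ChainRelation

variable {K : Type*} [Field K] {d : ℕ} {γ r : ℕ → K} {c : ℕ → ℕ → K}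
  (h : ChainRelation d γ r c)
include h

theorem term_eq_zero {j m i : ℕ} (hj : j ≤ d) (hi : i ∈ range (j + 1)) (h₁ : m + 1 ≠ i)
    (h₂ : i + 1 ≠ m) : γ (j - i) * c i m = 0 := by
  rw [h.c_eq_zero i (by rw [mem_range] at hi; omega) m h₁ h₂, mul_zero]

theorem sum_eq_single {j m i : ℕ} (hj : j ≤ d) (hm : m ≤ d) (hi : i ≤ j)
    (hother : ∀ k ≤ j, k ≠ i → m + 1 ≠ k ∧ k + 1 ≠ m) :
    γ (j - i) * c i m = if m ≤ j + 1 then r j * γ (j + 1 - m) else 0 := by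
  rw [← h.sum_eq j hj m hm, Finset.sum_eq_single_of_mem i (by simpa [Nat.lt_succ_iff])]
  intro k hk hki
  have := hother k (by simpa [Nat.lt_succ_iff] using hk) hki
  exact h.term_eq_zero hj hk this.1 this.2

theorem sum_eq_pair {j m : ℕ} (hj : j ≤ d) (hm : 1 ≤ m) (hmj : m + 1 ≤ j) :
    γ (j - (m + 1)) * c (m + 1) m + γ (j - (m - 1)) * c (m - 1) m =
      r j * γ (j + 1 - m) := by
  have hsum := h.sum_eq j hj m (by omega)
  rwa [if_pos (by omega), Finset.sum_eq_add_of_mem (m + 1) (m - 1) (by rw [mem_range]; omega)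
    (by rw [mem_range]; omega) (by omega)
    fun k hk hne => h.term_eq_zero hj hk (Ne.symm hne.1) (by omega)] at hsum

theorem c_succ_eq (hγ0 : γ 0 = 1) {j : ℕ} (hj : j < d) : c j (j + 1) = r j := by
  have := h.sum_eq_single (le_of_lt hj) hj le_rfl (i := j) fun k hk hkj => ⟨by omega, by omega⟩
  rwa [Nat.sub_self, if_pos (Nat.le_refl _), Nat.sub_self, hγ0, one_mul, mul_one] at this

theorem gamma_one_eq_zero (hd : 1 ≤ d) (hγ0 : γ 0 = 1) : γ 1 = 0 := by
  have := h.sum_eq_single le_rfl le_rfl (by omega : d - 1 ≤ d)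
    fun k hk hkj => ⟨by omega, by omega⟩
  have hc := h.c_succ_eq hγ0 (j := d - 1) (by omega)
  rw [Nat.sub_add_cancel hd] at hc
  rw [Nat.sub_sub_self hd, hc, if_pos (by omega), h.r_self, zero_mul] at this
  exact (mul_eq_zero.1 this).resolve_right (h.r_ne_zero _ (by omega))

theorem gamma_even_mul (hγ0 : γ 0 = 1) {t : ℕ} (ht : 2 * t + 1 ≤ d) :
    γ (2 * t) * (r 1 * γ 2) = r (2 * t + 1) * γ (2 * t + 2) := by
  have key : ∀ s, 2 * s + 1 ≤ d → γ (2 * s) * c 1 0 = r (2 * s + 1) * γ (2 * s + 2) := by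
    intro s hs
    have := h.sum_eq_single hs (Nat.zero_le d) (by omega : 1 ≤ 2 * s + 1)
      fun k hk hk1 => ⟨by omega, by omega⟩
    rwa [if_pos (Nat.zero_le _), Nat.sub_zero, Nat.add_sub_cancel] at this
  have h1 := key 0 (by omega)
  rw [mul_zero, hγ0, one_mul] at h1
  rw [← h1, key t ht]

theorem gamma_even_ne_zero (hγ0 : γ 0 = 1) (hγ2 : γ 2 ≠ 0) {t : ℕ} (ht : 2 * t ≤ d) :
    γ (2 * t) ≠ 0 := by
  induction t with
  | zero => rw [mul_zero, hγ0]; exact one_ne_zero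
  | succ t ih =>
    have hne : γ (2 * t) * (r 1 * γ 2) ≠ 0 :=
      mul_ne_zero (ih (by omega)) (mul_ne_zero (h.r_ne_zero 1 (by omega)) hγ2)
    rw [h.gamma_even_mul hγ0 (by omega)] at hne
    exact right_ne_zero_of_mul hne

theorem sq_ne_mul (hγ0 : γ 0 = 1) (hγ2 : γ 2 ≠ 0) {n : ℕ} (hn : 1 ≤ n)
    (hnd : 2 * n + 2 ≤ d) :
    γ (2 * n) ^ 2 ≠ γ (2 * n - 2) * γ (2 * n + 2) := by
  set m := d - 2 * n - 1
  have hc : c (m - 1) m = r (m - 1) := by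
    have := h.c_succ_eq hγ0 (j := m - 1) (by omega)
    rwa [Nat.sub_add_cancel (by omega)] at this
  have hEd := h.sum_eq_pair le_rfl (by omega : 1 ≤ m) (by omega)
  have hEd2 := h.sum_eq_pair (by omega : d - 2 ≤ d) (by omega : 1 ≤ m) (by omega)
  rw [h.r_self, zero_mul, hc, show d - (m + 1) = 2 * n by omega,
    show d - (m - 1) = 2 * n + 2 by omega] at hEd
  rw [hc, show d - 2 - (m + 1) = 2 * n - 2 by omega, show d - 2 - (m - 1) = 2 * n by omega,
    show d - 2 + 1 - m = 2 * n by omega] at hEd2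
  intro hsq
  have : r (d - 2) * γ (2 * n) ^ 2 = 0 := by
    linear_combination γ (2 * n - 2) * hEd - γ (2 * n) * hEd2 + r (m - 1) * hsq
  exact mul_ne_zero (h.r_ne_zero _ (by omega))
    (pow_ne_zero 2 (h.gamma_even_ne_zero hγ0 hγ2 (by omega))) this

end ChainRelation

theorem exists_chainRelation {d : ℕ} (b : Module.Basis (Fin (d + 1)) F V) {x y : ℕ → V}
    (hbx : ∀ i : Fin (d + 1), b i = x i) {γ : ℕ → F} (hγ : IsToeplitzTransition d x y γ)
    {X : Module.End F V} (hXy : ∀ j < d, ∃ t : F, t ≠ 0 ∧ X (y j) = t • y (j + 1))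
    (hXd : X (y d) = 0)
    (hX : ∀ i ≤ d, ∀ m, m + 1 ≠ i → i + 1 ≠ m → natCoord b m (X (x i)) = 0) :
    ∃ r, ChainRelation d γ r fun i m => natCoord b m (X (x i)) := by
  choose! r hr0 hr using hXy
  refine ⟨fun j => if j < d then r j else 0, fun j hj => by simpa [hj] using hr0 j hj,
    by simp, hX, fun j hj m hm => ?_⟩
  have hlhs :
      natCoord b m (X (y j)) = ∑ i ∈ range (j + 1), γ (j - i) * natCoord b m (X (x i)) := by
    simp only [hγ j hj, map_sum, map_smul, smul_eq_mul]
  rw [← hlhs]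
  rcases lt_or_eq_of_le hj with hjd | rfl
  · rw [if_pos hjd, hr j hjd, map_smul, hγ (j + 1) hjd, natCoord_sum_smul hbx _ hjd, smul_eq_mul,
      mul_ite, mul_zero]
  · rw [hXd, map_zero, if_neg (lt_irrefl j), zero_mul, ite_self]

namespace IsLRBasisFor

variable {d : ℕ} {C : Module.End F V} {D : LRDecomp F V d} {w : ℕ → V}
  (hw : IsLRBasisFor C D w)
include hw

theorem exists_basis : ∃ b : Module.Basis (Fin (d + 1)) F V, ∀ i, b i = w i :=
  D.exists_basis w (Equiv.refl _) (fun i => (hw.1 i i.is_le).1) fun i => (hw.1 i i.is_le).2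

theorem exists_smul_of_raises {A : Module.End F V} (hA : Raises A D) :
    ∀ j < d, ∃ t : F, t ≠ 0 ∧ A (w j) = t • w (j + 1) := fun j hj =>
  D.exists_smul_of_map_eq (by omega) hj (hA j (by omega)) (hw.1 j (by omega)).1
    (hw.1 j (by omega)).2 (hw.1 (j + 1) hj).1 (hw.1 (j + 1) hj).2

theorem map_last_eq_zero {A : Module.End F V} (hA : Raises A D) : A (w d) = 0 := by
  have := mem_map_of_mem (f := A) (hw.1 d le_rfl).1
  rwa [hA d le_rfl, D.eq_bot_of_gt _ (Nat.lt_succ_self d), mem_bot] at this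

theorem natCoord_map_eq_zero (b : Module.Basis (Fin (d + 1)) F V) (hb : ∀ i, b i = w i)
    {X : Module.End F V}
    (hX : ∀ t ≤ d, (D.sub t).map X ≤ D.flagGE (t - 1) ⊓ D.flagLE (t + 1))
    {E : ℕ → Module.End F V} (hE : IsIdemSeq D E)
    (htr : ∀ k ≤ d, LinearMap.trace F V (X * E k) = 0) :
    ∀ i ≤ d, ∀ m, m + 1 ≠ i → i + 1 ≠ m → natCoord b m (X (w i)) = 0 := by
  intro i hi m h₁ h₂
  rcases le_or_gt m d with hm | hm
  · rw [← hb ⟨i, by omega⟩, natCoord_apply b ⟨m, by omega⟩]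
    exact D.repr_map_eq_zero_of_not_adjacent b (Equiv.refl _) hX hE htr
      (fun i => hb i ▸ (hw.1 i i.is_le).1) h₁ h₂
  · rw [natCoord_of_lt b hm, LinearMap.zero_apply]

end IsLRBasisFor

namespace IsLRBasisRev

variable {d : ℕ} {C : Module.End F V} {D : LRDecomp F V d} {u : ℕ → V}
  (hu : IsLRBasisRev C D u)
include hu

theorem mem_sub_rev (i : Fin (d + 1)) : u i ∈ D.sub (Fin.revPerm i) := by
  simpa [Fin.val_rev, Nat.add_sub_add_right] using (hu.1 i i.is_le).1

theorem exists_basis : ∃ b : Module.Basis (Fin (d + 1)) F V, ∀ i, b i = u i :=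
  D.exists_basis u Fin.revPerm hu.mem_sub_rev fun i => (hu.1 i i.is_le).2

theorem exists_smul_of_lowers {B : Module.End F V} (hB : Lowers B D) :
    ∀ j < d, ∃ t : F, t ≠ 0 ∧ B (u j) = t • u (j + 1) := fun j hj => by
  have hmap := hB.2 (d - (j + 1)) (by omega)
  rw [show d - (j + 1) + 1 = d - j by omega] at hmap
  exact D.exists_smul_of_map_eq (by omega) (by omega) hmap (hu.1 j (by omega)).1
    (hu.1 j (by omega)).2 (hu.1 (j + 1) hj).1 (hu.1 (j + 1) hj).2

theorem map_last_eq_zero {B : Module.End F V} (hB : Lowers B D) : B (u d) = 0 := by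
  have := mem_map_of_mem (f := B) (hu.1 d le_rfl).1
  rwa [Nat.sub_self, hB.1, mem_bot] at this

theorem natCoord_map_eq_zero (b : Module.Basis (Fin (d + 1)) F V) (hb : ∀ i, b i = u i)
    {X : Module.End F V}
    (hX : ∀ t ≤ d, (D.sub t).map X ≤ D.flagGE (t - 1) ⊓ D.flagLE (t + 1))
    {E : ℕ → Module.End F V} (hE : IsIdemSeq D E)
    (htr : ∀ k ≤ d, LinearMap.trace F V (X * E k) = 0) :
    ∀ i ≤ d, ∀ m, m + 1 ≠ i → i + 1 ≠ m → natCoord b m (X (u i)) = 0 := by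
  intro i hi m h₁ h₂
  rcases le_or_gt m d with hm | hm
  · rw [← hb ⟨i, by omega⟩, natCoord_apply b ⟨m, by omega⟩]
    exact D.repr_map_eq_zero_of_not_adjacent b Fin.revPerm hX hE htr
      (fun i => hb i ▸ hu.mem_sub_rev i) (by simp [Fin.val_rev]; omega)
      (by simp [Fin.val_rev]; omega)
  · rw [natCoord_of_lt b hm, LinearMap.zero_apply]

end IsLRBasisRev

namespace IsToeplitzTransition

variable {d : ℕ} {u w : ℕ → V} {α : ℕ → F}

theorem zero_eq_one (h : IsToeplitzTransition d u w α) (h₀ : u 0 = w 0) (hu₀ : u 0 ≠ 0) :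
    α 0 = 1 := by
  have := h 0 (Nat.zero_le d)
  rw [Finset.sum_range_one, Nat.sub_self, ← h₀] at this
  exact smul_left_injective F hu₀ (this.symm.trans (one_smul F _).symm)

theorem sum_mul_eq_ite {β : ℕ → F} (hα : IsToeplitzTransition d u w α)
    (hβ : IsToeplitzTransition d w u β) (b : Module.Basis (Fin (d + 1)) F V)
    (hb : ∀ i, b i = u i) {n : ℕ} (hn : n ≤ d) :
    ∑ i ∈ range (n + 1), β (n - i) * α i = if n = 0 then 1 else 0 := by
  have := congrArg (natCoord b 0) (hβ n hn)
  rw [natCoord_self hb hn, map_sum] at this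
  rw [this]
  refine Finset.sum_congr rfl fun i hi => ?_
  rw [mem_range] at hi
  rw [map_smul, hα i (by omega), natCoord_sum_smul hb _ (by omega), if_pos (Nat.zero_le _),
    Nat.sub_zero, smul_eq_mul]

end IsToeplitzTransition

theorem stmt12_general
    {F : Type*} [Field F] {V : Type*} [AddCommGroup V] [Module F V]
    {d : ℕ}
    (A B C : Module.End F V) (DAB DBC DCA : LRDecomp F V d)
    (hAB : IsLRPairWith A B DAB) (hBC : IsLRPairWith B C DBC) (hCA : IsLRPairWith C A DCA)
    (E E' E'' : ℕ → Module.End F V)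
    (hE' : IsIdemSeq DBC E') (hE'' : IsIdemSeq DCA E'')
    (hbip : IsBipartite d A B C E E' E'')
    (u₁ w₁ : ℕ → V) (α α' α'' : ℕ → F)
    (hu₁ : IsLRBasisRev C DBC u₁) (hw₁ : IsLRBasisFor C DCA w₁) (hc₁ : u₁ 0 = w₁ 0)
    (hα : IsToeplitzTransition d u₁ w₁ α)
    (hnorm : α 2 = 1 ∧ α' 2 = 1 ∧ α'' 2 = 1)
    (β : ℕ → F) (hβ : IsToeplitzTransition d w₁ u₁ β) :
    ∀ i, 1 ≤ i → i ≤ d / 2 - 1 →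
      α (2 * i) ^ 2 ≠ α (2 * i - 2) * α (2 * i + 2) ∧
      β (2 * i) ^ 2 ≠ β (2 * i - 2) * β (2 * i + 2) := by
  intro i hi hid
  obtain ⟨bu, hbu⟩ := hu₁.exists_basis
  obtain ⟨bw, hbw⟩ := hw₁.exists_basis
  obtain ⟨r, hr⟩ := exists_chainRelation bu hbu hα (hw₁.exists_smul_of_raises hCA.2)
    (hw₁.map_last_eq_zero hCA.2) (hu₁.natCoord_map_eq_zero bu hbu
      (map_sub_le_flagGE_inf_flagLE hAB hBC hCA) hE' fun k hk => (hbip k hk).2.1)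
  obtain ⟨s, hs⟩ := exists_chainRelation bw hbw hβ (hu₁.exists_smul_of_lowers hBC.1)
    (hu₁.map_last_eq_zero hBC.1) (hw₁.natCoord_map_eq_zero bw hbw
      (map_sub_le_flagGE_inf_flagLE hBC hCA hAB) hE'' fun k hk => (hbip k hk).2.2)
  have hu0 : u₁ 0 ≠ 0 := (hu₁.1 0 (Nat.zero_le d)).2
  have hα0 : α 0 = 1 := hα.zero_eq_one hc₁ hu0
  have hβ0 : β 0 = 1 := hβ.zero_eq_one hc₁.symm (hc₁ ▸ hu0)
  have hα1 : α 1 = 0 := hr.gamma_one_eq_zero (by omega) hα0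
  have hβ2 : β 2 = -1 := by
    have := hα.sum_mul_eq_ite hβ bu hbu (n := 2) (by omega)
    simp only [Finset.sum_range_succ, Finset.sum_range_zero] at this
    norm_num [hα0, hα1, hnorm.1, hβ0] at this
    linear_combination this
  exact ⟨hr.sq_ne_mul hα0 (by rw [hnorm.1]; exact one_ne_zero) hi (by omega),
    hs.sq_ne_mul hβ0 (by rw [hβ2]; exact neg_ne_zero.2 one_ne_zero) hi (by omega)⟩

theorem stmt12
    {F : Type*} [Field F] {V : Type*} [AddCommGroup V] [Module F V]
    [FiniteDimensional F V] {d : ℕ} (hdim : Module.finrank F V = d + 1)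
    (A B C : Module.End F V) (DAB DBC DCA : LRDecomp F V d)
    (hAB : IsLRPairWith A B DAB) (hBC : IsLRPairWith B C DBC) (hCA : IsLRPairWith C A DCA)
    (hd : 4 ≤ d)
    (E E' E'' : ℕ → Module.End F V)
    (hE : IsIdemSeq DAB E) (hE' : IsIdemSeq DBC E') (hE'' : IsIdemSeq DCA E'')
    (hbip : IsBipartite d A B C E E' E'')
    (u₁ w₁ u₂ w₂ u₃ w₃ : ℕ → V) (α α' α'' : ℕ → F)
    (hu₁ : IsLRBasisRev C DBC u₁) (hw₁ : IsLRBasisFor C DCA w₁) (hc₁ : u₁ 0 = w₁ 0)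
    (hα : IsToeplitzTransition d u₁ w₁ α)
    (hu₂ : IsLRBasisRev A DCA u₂) (hw₂ : IsLRBasisFor A DAB w₂) (hc₂ : u₂ 0 = w₂ 0)
    (hα' : IsToeplitzTransition d u₂ w₂ α')
    (hu₃ : IsLRBasisRev B DAB u₃) (hw₃ : IsLRBasisFor B DBC w₃) (hc₃ : u₃ 0 = w₃ 0)
    (hα'' : IsToeplitzTransition d u₃ w₃ α'')
    (hnorm : α 2 = 1 ∧ α' 2 = 1 ∧ α'' 2 = 1)
    (β : ℕ → F) (hβ : IsToeplitzTransition d w₁ u₁ β) :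
    ∀ i, 1 ≤ i → i ≤ d / 2 - 1 →
      α (2 * i) ^ 2 ≠ α (2 * i - 2) * α (2 * i + 2) ∧
      β (2 * i) ^ 2 ≠ β (2 * i - 2) * β (2 * i + 2) :=
  stmt12_general A B C DAB DBC DCA hAB hBC hCA E E' E'' hE' hE'' hbip u₁ w₁ α α' α'' hu₁ hw₁ hc₁ hα
    hnorm β hβ
end
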